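/- arXiv:2601.07341 — 9 statements merged into one kernel-verified Lean document; each statement's English description precedes it below -/
import Mathlib

section
/- Let d ≥ 2, Ω ⊆ ℝ^d be open, ε ∈ (0,1/2], r > 0, ν ∈ ℝ^d a unit vector, and let x₀ ∈ ∂Ω be an (ε,r)-good point with respect to ν. Then for every x ∈ Ω ∩ Γ_r(x₀,ε) and every y ∈ ∂Ω ∩ B_r(x₀), setting x* := 2x₀ − x, the following hold: |(x−x₀)·(y−x₀)| ≤ 2ε|x−x₀||y−x₀|; | |x−y|² − |x−x₀|² − |y−x₀|² | ≤ 2ε|x−x₀|² + 2ε|y−x₀|²; | |x*−y|² − |x−x₀|² − |y−x₀|² | ≤ 2ε|x−x₀|² + 2ε|y−x₀|²; and moreover √(1−2ε)·|x−x₀| ≤ d_Ω(x) ≤ |x−x₀|. -/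
/-!
Write `a = x - x₀` and `b = y - x₀`. The cone condition on `x` makes `a` almost parallel to `ν`,
while goodness of `x₀` makes `b` almost orthogonal to `ν`; splitting both vectors into their
components along `ν` and orthogonal to `ν` gives `|⟪a, b⟫| ≤ 2ε‖a‖‖b‖`. Expanding `‖a ∓ b‖²` turns
this into the two estimates on squared distances. For the lower bound on `d_Ω(x)`, a nearest
point `y'` of `Ωᶜ` to `x` lies on `∂Ω` within `‖a‖ < r/2` of `x`, hence in `B_r(x₀)`, and the
estimate on `‖a - b‖²` with `b = y' - x₀` gives `d_Ω(x)² ≥ (1 - 2ε)(‖a‖² + ‖b‖²)`.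
-/

open Metric Set
open scoped InnerProductSpace

lemma sqrt_one_sub_two_mul_mul_le_norm_sub {E : Type*} [SeminormedAddCommGroup E] {a b : E}
    {ε : ℝ} (hε : ε ≤ 1 / 2)
    (h : |‖a - b‖ ^ 2 - ‖a‖ ^ 2 - ‖b‖ ^ 2| ≤ 2 * ε * ‖a‖ ^ 2 + 2 * ε * ‖b‖ ^ 2) :
    Real.sqrt (1 - 2 * ε) * ‖a‖ ≤ ‖a - b‖ := by
  refine le_of_sq_le_sq ?_ (norm_nonneg _)
  rw [mul_pow, Real.sq_sqrt (by linarith)]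
  nlinarith [abs_le.1 h, sq_nonneg ‖b‖]

section InnerProduct

variable {E : Type*} [NormedAddCommGroup E] [InnerProductSpace ℝ E]

lemma norm_sub_inner_smul_sq_of_norm_eq_one {ν : E} (hν : ‖ν‖ = 1) (a : E) :
    ‖a - ⟪a, ν⟫_ℝ • ν‖ ^ 2 = ‖a‖ ^ 2 - ⟪a, ν⟫_ℝ ^ 2 := by
  rw [norm_sub_sq_real, real_inner_smul_right, norm_smul, Real.norm_eq_abs, mul_pow, sq_abs, hν]
  ring

lemma abs_inner_le_two_mul_of_sq_inner_ge_of_abs_inner_le {ν a b : E} (hν : ‖ν‖ = 1)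
    {ε : ℝ} (hε : 0 ≤ ε) (ha : (1 - ε ^ 2) * ‖a‖ ^ 2 ≤ ⟪a, ν⟫_ℝ ^ 2)
    (hb : |⟪b, ν⟫_ℝ| ≤ ε * ‖b‖) :
    |⟪a, b⟫_ℝ| ≤ 2 * ε * (‖a‖ * ‖b‖) := by
  set α := ⟪a, ν⟫_ℝ
  set β := ⟪b, ν⟫_ℝ
  have hsplit : ⟪a, b⟫_ℝ = α * β + ⟪a - α • ν, b - β • ν⟫_ℝ := by
    simp only [inner_sub_left, inner_sub_right, real_inner_smul_left, real_inner_smul_right,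
      real_inner_self_eq_norm_sq, hν, real_inner_comm b ν, α, β]
    ring
  have hα : |α| ≤ ‖a‖ := by simpa [hν] using abs_real_inner_le_norm a ν
  have ha' : ‖a - α • ν‖ ≤ ε * ‖a‖ := by
    refine le_of_sq_le_sq ?_ (by positivity)
    rw [norm_sub_inner_smul_sq_of_norm_eq_one hν]
    nlinarith
  have hb' : ‖b - β • ν‖ ≤ ‖b‖ := by
    refine le_of_sq_le_sq ?_ (norm_nonneg b)
    rw [norm_sub_inner_smul_sq_of_norm_eq_one hν]
    nlinarith [sq_nonneg β]
  calc |⟪a, b⟫_ℝ| ≤ |α| * |β| + ‖a - α • ν‖ * ‖b - β • ν‖ := by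
        rw [hsplit, ← abs_mul]
        exact (abs_add_le _ _).trans (add_le_add_right (abs_real_inner_le_norm _ _) _)
    _ ≤ ‖a‖ * (ε * ‖b‖) + ε * ‖a‖ * ‖b‖ := by gcongr
    _ = 2 * ε * (‖a‖ * ‖b‖) := by ring

lemma abs_norm_add_sq_sub_le_of_abs_inner_le {a b : E} {ε : ℝ} (hε : 0 ≤ ε)
    (h : |⟪a, b⟫_ℝ| ≤ 2 * ε * (‖a‖ * ‖b‖)) :
    |‖a + b‖ ^ 2 - ‖a‖ ^ 2 - ‖b‖ ^ 2| ≤ 2 * ε * ‖a‖ ^ 2 + 2 * ε * ‖b‖ ^ 2 := by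
  have hamgm : 2 * ε * (2 * (‖a‖ * ‖b‖)) ≤ 2 * ε * (‖a‖ ^ 2 + ‖b‖ ^ 2) := by
    gcongr
    nlinarith [sq_nonneg (‖a‖ - ‖b‖)]
  have hexpand : ‖a + b‖ ^ 2 - ‖a‖ ^ 2 - ‖b‖ ^ 2 = 2 * ⟪a, b⟫_ℝ := by
    rw [norm_add_sq_real]; ring
  rw [hexpand, abs_mul, abs_two]
  linarith

lemma abs_norm_sub_sq_sub_le_of_abs_inner_le {a b : E} {ε : ℝ} (hε : 0 ≤ ε)
    (h : |⟪a, b⟫_ℝ| ≤ 2 * ε * (‖a‖ * ‖b‖)) :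
    |‖a - b‖ ^ 2 - ‖a‖ ^ 2 - ‖b‖ ^ 2| ≤ 2 * ε * ‖a‖ ^ 2 + 2 * ε * ‖b‖ ^ 2 := by
  simpa [sub_eq_add_neg] using
    abs_norm_add_sq_sub_le_of_abs_inner_le (b := -b) hε (by simpa using h)

lemma sqrt_one_sub_two_mul_mul_le_infDist_compl [FiniteDimensional ℝ E] {Ω : Set E}
    {x x₀ : E} {ε r : ℝ} (hε : ε ∈ Icc (0 : ℝ) (1 / 2)) (hx : x ∈ Ω) (hx₀ : x₀ ∉ Ω)
    (hxr : x ∈ ball x₀ (r / 2))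
    (h : ∀ z ∈ frontier Ω ∩ ball x₀ r, |⟪x - x₀, z - x₀⟫_ℝ| ≤ 2 * ε * (‖x - x₀‖ * ‖z - x₀‖)) :
    Real.sqrt (1 - 2 * ε) * ‖x - x₀‖ ≤ infDist x Ωᶜ := by
  obtain ⟨y, hy, hdist⟩ :=
    exists_mem_frontier_infDist_compl_eq_dist hx ((ne_univ_iff_exists_notMem _).2 ⟨x₀, hx₀⟩)
  have hyx : dist x y ≤ dist x x₀ := hdist ▸ infDist_le_dist_of_mem hx₀
  have hyr : y ∈ ball x₀ r := by
    rw [mem_ball] at hxr ⊢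
    linarith [dist_triangle_left y x₀ x]
  rw [hdist, dist_eq_norm, ← sub_sub_sub_cancel_right x y x₀]
  exact sqrt_one_sub_two_mul_mul_le_norm_sub hε.2
    (abs_norm_sub_sq_sub_le_of_abs_inner_le hε.1 (h y ⟨hy, hyr⟩))

end InnerProduct

lemma mul_sq_le_sq_of_lt_neg_sqrt_mul {c s t : ℝ} (hc : 0 ≤ c) (hs : 0 ≤ s)
    (h : t < -Real.sqrt c * s) : c * s ^ 2 ≤ t ^ 2 := by
  have : Real.sqrt c * s ≤ |t| := by linarith [neg_abs_le t]
  calc c * s ^ 2 = (Real.sqrt c * s) ^ 2 := by rw [mul_pow, Real.sq_sqrt hc]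
    _ ≤ |t| ^ 2 := by gcongr
    _ = t ^ 2 := sq_abs t

theorem stmt_0_general (d : ℕ) (Ω : Set (EuclideanSpace ℝ (Fin d))) (hΩ : IsOpen Ω)
    (ε r : ℝ) (hε : ε ∈ Set.Ioc (0:ℝ) (1/2))
    (ν : EuclideanSpace ℝ (Fin d)) (hν : ‖ν‖ = 1)
    (x₀ : EuclideanSpace ℝ (Fin d)) (hx₀ : x₀ ∈ frontier Ω)
    (hgood : ∀ z ∈ frontier Ω ∩ ball x₀ r, |⟪z - x₀, ν⟫_ℝ| ≤ ε * ‖z - x₀‖)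
    (x : EuclideanSpace ℝ (Fin d)) (hxΩ : x ∈ Ω)
    (hxΓ : ⟪x - x₀, ν⟫_ℝ < -Real.sqrt (1 - ε ^ 2) * ‖x - x₀‖)
    (hxB : x ∈ ball x₀ (r / 2))
    (y : EuclideanSpace ℝ (Fin d)) (hy : y ∈ frontier Ω ∩ ball x₀ r) :
    |⟪x - x₀, y - x₀⟫_ℝ| ≤ 2 * ε * (‖x - x₀‖ * ‖y - x₀‖) ∧
    |‖x - y‖ ^ 2 - ‖x - x₀‖ ^ 2 - ‖y - x₀‖ ^ 2| ≤ 2 * ε * ‖x - x₀‖ ^ 2 + 2 * ε * ‖y - x₀‖ ^ 2 ∧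
    |‖((2:ℝ) • x₀ - x) - y‖ ^ 2 - ‖x - x₀‖ ^ 2 - ‖y - x₀‖ ^ 2|
        ≤ 2 * ε * ‖x - x₀‖ ^ 2 + 2 * ε * ‖y - x₀‖ ^ 2 ∧
    Real.sqrt (1 - 2 * ε) * ‖x - x₀‖ ≤ Metric.infDist x Ωᶜ ∧
    Metric.infDist x Ωᶜ ≤ ‖x - x₀‖ := by
  obtain ⟨hε0, hε12⟩ := hε
  have hcone : (1 - ε ^ 2) * ‖x - x₀‖ ^ 2 ≤ ⟪x - x₀, ν⟫_ℝ ^ 2 :=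
    mul_sq_le_sq_of_lt_neg_sqrt_mul (by nlinarith) (norm_nonneg _) hxΓ
  have hinner : ∀ z ∈ frontier Ω ∩ ball x₀ r,
      |⟪x - x₀, z - x₀⟫_ℝ| ≤ 2 * ε * (‖x - x₀‖ * ‖z - x₀‖) := fun z hz =>
    abs_inner_le_two_mul_of_sq_inner_ge_of_abs_inner_le hν hε0.le hcone (hgood z hz)
  have hx₀Ω : x₀ ∉ Ω := fun h => (hΩ.inter_frontier_eq.subset ⟨h, hx₀⟩).elim
  have hreflect : (2 : ℝ) • x₀ - x - y = -((x - x₀) + (y - x₀)) := by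
    rw [two_smul]; abel
  refine ⟨hinner y hy, ?_, ?_, ?_, ?_⟩
  · rw [← sub_sub_sub_cancel_right x y x₀]
    exact abs_norm_sub_sq_sub_le_of_abs_inner_le hε0.le (hinner y hy)
  · rw [hreflect, norm_neg]
    exact abs_norm_add_sq_sub_le_of_abs_inner_le hε0.le (hinner y hy)
  · exact sqrt_one_sub_two_mul_mul_le_infDist_compl ⟨hε0.le, hε12⟩ hxΩ hx₀Ω hxB hinner
  · simpa [dist_eq_norm] using infDist_le_dist_of_mem (x := x) hx₀Ω

/-- Lemma `distance to boundary in good set`: for an `(ε,r)`-good point `x₀ ∈ ∂Ω` with respect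
to a unit vector `ν`, every `x ∈ Ω ∩ Γ_r(x₀,ε)` and `y ∈ ∂Ω ∩ B_r(x₀)` satisfy the stated
near-orthogonality estimates, and `√(1-2ε)‖x-x₀‖ ≤ d_Ω(x) ≤ ‖x-x₀‖`. -/
theorem stmt_0 (d : ℕ) (hd : 2 ≤ d) (Ω : Set (EuclideanSpace ℝ (Fin d))) (hΩ : IsOpen Ω)
    (ε r : ℝ) (hε : ε ∈ Set.Ioc (0:ℝ) (1/2)) (hr : 0 < r)
    (ν : EuclideanSpace ℝ (Fin d)) (hν : ‖ν‖ = 1)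
    (x₀ : EuclideanSpace ℝ (Fin d)) (hx₀ : x₀ ∈ frontier Ω)
    (hgood : ∀ z ∈ frontier Ω ∩ ball x₀ r, |⟪z - x₀, ν⟫_ℝ| ≤ ε * ‖z - x₀‖)
    (x : EuclideanSpace ℝ (Fin d)) (hxΩ : x ∈ Ω)
    (hxΓ : ⟪x - x₀, ν⟫_ℝ < -Real.sqrt (1 - ε ^ 2) * ‖x - x₀‖)
    (hxB : x ∈ ball x₀ (r / 2))
    (y : EuclideanSpace ℝ (Fin d)) (hy : y ∈ frontier Ω ∩ ball x₀ r) :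
    |⟪x - x₀, y - x₀⟫_ℝ| ≤ 2 * ε * (‖x - x₀‖ * ‖y - x₀‖) ∧
    |‖x - y‖ ^ 2 - ‖x - x₀‖ ^ 2 - ‖y - x₀‖ ^ 2| ≤ 2 * ε * ‖x - x₀‖ ^ 2 + 2 * ε * ‖y - x₀‖ ^ 2 ∧
    |‖((2:ℝ) • x₀ - x) - y‖ ^ 2 - ‖x - x₀‖ ^ 2 - ‖y - x₀‖ ^ 2|
        ≤ 2 * ε * ‖x - x₀‖ ^ 2 + 2 * ε * ‖y - x₀‖ ^ 2 ∧
    Real.sqrt (1 - 2 * ε) * ‖x - x₀‖ ≤ Metric.infDist x Ωᶜ ∧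
    Metric.infDist x Ωᶜ ≤ ‖x - x₀‖ :=
  stmt_0_general d Ω hΩ ε r hε ν hν x₀ hx₀ hgood x hxΩ hxΓ hxB y hy
end

section
/- Let d ≥ 2. There is a constant C depending only on d with the following property. Let Ω ⊆ ℝ^d be open, ε ∈ (0,1/4], r > 0, ν₀ a unit vector, and x₀ ∈ ∂Ω an (ε,r)-good point with respect to ν₀. Let x ∈ Ω ∩ Γ_r(x₀,ε), set x* := 2x₀ − x, let ρ ∈ (0, r/2], let n ∈ ℝ^d be a unit vector, let s ∈ (0, 4ρ²), and let y ∈ ∂Ω with |y−x₀| < 2ρ, and assume that either s ≥ ρ² or |y−x₀| ≥ ρ. Then | (2s(4πs)^{d/2})^{−1} · n·( (y−x)·e^{−|x−y|²/(4s)} + (y−x*)·e^{−|x*−y|²/(4s)} ) | ≤ C·(ε + |n−ν₀|)·ρ^{−(d+1)}. -/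
open MeasureTheory Metric Set
open scoped InnerProductSpace

lemma my_sq_le {a b : ℝ} (ha : 0 ≤ a) (hb : 0 ≤ b) (h : a^2 ≤ b^2) : a ≤ b := by
  nlinarith

lemma my_pow_exp (k : ℕ) (q : ℝ) (hq : 0 ≤ q) : q^k * Real.exp (-(2*q)) ≤ (k:ℝ)^k := by
  rcases Nat.eq_zero_or_pos k with rfl | hk
  · simpa using Real.exp_le_one_iff.mpr (by linarith : -(2*q) ≤ 0)
  · have hk0 : (0:ℝ) < k := Nat.cast_pos.mpr hk
    have h2 := Real.add_one_le_exp (2*q/k)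
    have h3 : q/k ≤ Real.exp (2*q/k) := by
      have h4 : 0 ≤ q/k := div_nonneg hq hk0.le
      have h5 : 2*q/k = 2*(q/k) := by ring
      rw [h5] at h2 ⊢; linarith
    have h1 : q ≤ k * Real.exp (2*q/k) := by
      calc q = k*(q/k) := by field_simp
        _ ≤ k*Real.exp (2*q/k) := mul_le_mul_of_nonneg_left h3 hk0.le
    have h4 : q^k ≤ (k * Real.exp (2*q/k))^k := pow_le_pow_left₀ hq h1 k
    have h5 : ((k:ℝ) * Real.exp (2*q/k))^k = (k:ℝ)^k * Real.exp (2*q) := by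
      rw [mul_pow, ← Real.exp_nat_mul]
      congr 1
      field_simp
    rw [h5] at h4
    have hE := Real.exp_pos (2*q)
    rw [Real.exp_neg, ← div_eq_mul_inv, div_le_iff₀ hE]
    linarith

lemma my_expdiff1 {A B q : ℝ} (hA : q ≤ A) (h : A ≤ B) :
    Real.exp (-A) - Real.exp (-B) ≤ (B - A) * Real.exp (-q) := by
  have h2 : Real.exp (-B) = Real.exp (-A) * Real.exp (A - B) := by
    rw [← Real.exp_add]; ring_nf
  have h3 : 1 - (B - A) ≤ Real.exp (A - B) := by
    have := Real.add_one_le_exp (A - B); linarith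
  have h4 : Real.exp (-A) ≤ Real.exp (-q) := Real.exp_le_exp.mpr (by linarith)
  have h5 : (0:ℝ) ≤ Real.exp (-A) := (Real.exp_pos _).le
  calc Real.exp (-A) - Real.exp (-B) = Real.exp (-A)*(1 - Real.exp (A-B)) := by rw [h2]; ring
    _ ≤ Real.exp (-A)*(B-A) := mul_le_mul_of_nonneg_left (by linarith) h5
    _ ≤ Real.exp (-q)*(B-A) := mul_le_mul_of_nonneg_right h4 (by linarith)
    _ = (B-A)*Real.exp (-q) := by ring

lemma my_expdiff {A B q : ℝ} (hA : q ≤ A) (hB : q ≤ B) :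
    |Real.exp (-B) - Real.exp (-A)| ≤ |B - A| * Real.exp (-q) := by
  rcases le_total A B with h | h
  · have h1 : Real.exp (-B) ≤ Real.exp (-A) := Real.exp_le_exp.mpr (by linarith)
    rw [abs_of_nonpos (by linarith), abs_of_nonneg (by linarith)]
    have := my_expdiff1 hA h; linarith
  · have h1 : Real.exp (-A) ≤ Real.exp (-B) := Real.exp_le_exp.mpr (by linarith)
    rw [abs_of_nonneg (by linarith), abs_of_nonpos (by linarith)]
    have := my_expdiff1 hB h; linarith

lemma my_scalar1 (q : ℝ) (hq : 0 ≤ q) :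
    (2 + 48*q)^2 * q * Real.exp (-(2*q)) ≤ 62980 := by
  have h1 := my_pow_exp 1 q hq
  have h2 := my_pow_exp 2 q hq
  have h3 := my_pow_exp 3 q hq
  norm_num at h1 h2 h3
  have e : (2 + 48*q)^2 * q * Real.exp (-(2*q))
      = 4*(q^1*Real.exp (-(2*q))) + 192*(q^2*Real.exp (-(2*q))) + 2304*(q^3*Real.exp (-(2*q))) := by
    ring
  rw [e]
  have h1' : q^1*Real.exp (-(2*q)) ≤ 1 := by simpa using my_pow_exp 1 q hq
  have h2' : q^2*Real.exp (-(2*q)) ≤ 4 := by have := my_pow_exp 2 q hq; norm_num at this; linarith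
  have h3' : q^3*Real.exp (-(2*q)) ≤ 27 := by have := my_pow_exp 3 q hq; norm_num at this; linarith
  linarith

lemma my_scalar2 (d : ℕ) (q : ℝ) (hq : 0 ≤ q) :
    (2 + 48*q)^2 * q^(d+2) * Real.exp (-(2*q))
      ≤ 4*((d:ℝ)+2)^(d+2) + 192*((d:ℝ)+3)^(d+3) + 2304*((d:ℝ)+4)^(d+4) := by
  have h1 := my_pow_exp (d+2) q hq
  have h2 := my_pow_exp (d+3) q hq
  have h3 := my_pow_exp (d+4) q hq
  push_cast at h1 h2 h3
  have e : (2 + 48*q)^2 * q^(d+2) * Real.exp (-(2*q))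
      = 4*(q^(d+2)*Real.exp (-(2*q))) + 192*(q^(d+3)*Real.exp (-(2*q)))
        + 2304*(q^(d+4)*Real.exp (-(2*q))) := by
    ring
  rw [e]
  have E0 : (0:ℝ) ≤ Real.exp (-(2*q)) := (Real.exp_pos _).le
  nlinarith [h1, h2, h3]

lemma my_tan_norm {d : ℕ} (ν v : EuclideanSpace ℝ (Fin d)) (hν : ‖ν‖ = 1) :
    ‖v - ⟪v, ν⟫_ℝ • ν‖^2 = ‖v‖^2 - ⟪v, ν⟫_ℝ^2 := by
  rw [norm_sub_sq_real, real_inner_smul_right, norm_smul, Real.norm_eq_abs, hν, mul_one, sq_abs]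
  ring

lemma my_inner_decomp {d : ℕ} (ν v w : EuclideanSpace ℝ (Fin d)) (hν : ‖ν‖ = 1) :
    ⟪v, w⟫_ℝ = ⟪v, ν⟫_ℝ * ⟪w, ν⟫_ℝ + ⟪v - ⟪v, ν⟫_ℝ • ν, w - ⟪w, ν⟫_ℝ • ν⟫_ℝ := by
  simp only [inner_sub_left, inner_sub_right, real_inner_smul_left, real_inner_smul_right,
    real_inner_self_eq_norm_sq, hν]
  rw [real_inner_comm ν w, real_inner_comm ν v]
  ring

set_option maxHeartbeats 2000000 in
lemma my_key (d : ℕ) : ∃ C : ℝ, 0 < C ∧ ∀ ρ s R : ℝ, 0 < ρ → 0 < s → 0 < R →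
    s < 4*ρ^2 → (ρ^2 ≤ s ∨ ρ ≤ R) →
    (2*s*(4*Real.pi*s) ^ ((d:ℝ)/2))⁻¹ * ((2*R + 6*R^3/s) * Real.exp (-(R^2/(8*s))))
      ≤ C / ρ^(d+1) := by
  set M : ℝ := 4*((d:ℝ)+2)^(d+2) + 192*((d:ℝ)+3)^(d+3) + 2304*((d:ℝ)+4)^(d+4) with hM
  have hMpos : 0 < M := by positivity
  refine ⟨1420 + Real.sqrt (2^(d+4) * M), by positivity, ?_⟩
  intro ρ s R hρ hs hR hs4 hcase
  have hsqM : Real.sqrt (2^(d+4) * M) ^ 2 = 2^(d+4) * M :=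
    Real.sq_sqrt (by positivity)
  have hsqM0 : 0 ≤ Real.sqrt (2^(d+4) * M) := Real.sqrt_nonneg _
  have hp1 : (0:ℝ) < ρ^(d+1) := pow_pos hρ _
  set q := R^2/(8*s) with hq
  have hq0 : 0 < q := by
    rw [hq]; exact div_pos (pow_pos hR 2) (by linarith)
  have hq8 : R^2 = 8*s*q := by rw [hq]; field_simp
  have hπ1 : (1:ℝ) ≤ Real.pi := by nlinarith [Real.pi_gt_three]
  have hπ : (4*s:ℝ) ≤ 4*Real.pi*s := by nlinarith
  have h4s : (0:ℝ) < 4*s := by linarith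
  have hrp1 : (0:ℝ) < (4*s) ^ ((d:ℝ)/2) := Real.rpow_pos_of_pos h4s _
  have hrp2 : (4*s) ^ ((d:ℝ)/2) ≤ (4*Real.pi*s) ^ ((d:ℝ)/2) :=
    Real.rpow_le_rpow h4s.le hπ (by positivity)
  have hden1 : (0:ℝ) < 2*s*(4*s) ^ ((d:ℝ)/2) := by
    apply mul_pos (by linarith) hrp1
  have hPinv : (2*s*(4*Real.pi*s) ^ ((d:ℝ)/2))⁻¹ ≤ (2*s*(4*s) ^ ((d:ℝ)/2))⁻¹ := by
    apply inv_anti₀ hden1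
    apply mul_le_mul_of_nonneg_left hrp2 (by linarith)
  have hN0 : 0 ≤ (2*R + 6*R^3/s) * Real.exp (-(R^2/(8*s))) := by
    apply mul_nonneg _ (Real.exp_pos _).le
    have h6 : (0:ℝ) ≤ 6*R^3/s := div_nonneg (by positivity) hs.le
    linarith
  have hcoef : 2*R + 6*R^3/s = (2 + 48*q)*R := by
    rw [hq]; field_simp; ring
  have hexpq : Real.exp (-(R^2/(8*s))) = Real.exp (-q) := by rw [hq]
  have hexp2 : (Real.exp (-q))^2 = Real.exp (-(2*q)) := by
    rw [← Real.exp_nat_mul]; norm_num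
  have hstep : (2*s*(4*Real.pi*s) ^ ((d:ℝ)/2))⁻¹ * ((2*R + 6*R^3/s) * Real.exp (-(R^2/(8*s))))
      ≤ (2*s*(4*s) ^ ((d:ℝ)/2))⁻¹ * ((2*R + 6*R^3/s) * Real.exp (-(R^2/(8*s)))) :=
    mul_le_mul_of_nonneg_right hPinv hN0
  have hsqpow : ((4*s) ^ ((d:ℝ)/2))^2 = (4*s)^d := by
    rw [← Real.rpow_natCast ((4*s) ^ ((d:ℝ)/2)) 2, ← Real.rpow_mul h4s.le]
    rw [show ((d:ℝ)/2) * ((2:ℕ):ℝ) = (d:ℝ) by push_cast; ring]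
    exact Real.rpow_natCast _ d
  have e0 : (0:ℝ) < Real.exp (-(2*q)) := Real.exp_pos _
  rcases hcase with hc1 | hc2
  · -- case ρ² ≤ s
    have hNle : (2*R + 6*R^3/s) * Real.exp (-(R^2/(8*s))) ≤ 1420*ρ := by
      apply my_sq_le hN0 (by positivity)
      rw [hexpq, hcoef, mul_pow, mul_pow, hexp2]
      have hR32 : R^2 ≤ 32*ρ^2*q := by rw [hq8]; nlinarith
      have hsc := my_scalar1 q hq0.le
      calc (2+48*q)^2*R^2*Real.exp (-(2*q))
          ≤ (2+48*q)^2*(32*ρ^2*q)*Real.exp (-(2*q)) := by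
            apply mul_le_mul_of_nonneg_right (mul_le_mul_of_nonneg_left hR32 (by positivity)) e0.le
        _ = 32*ρ^2*((2+48*q)^2*q*Real.exp (-(2*q))) := by ring
        _ ≤ 32*ρ^2*62980 := by
            apply mul_le_mul_of_nonneg_left hsc (by positivity)
        _ ≤ (1420*ρ)^2 := by nlinarith [sq_nonneg ρ]
    have h2ρd : ((2*ρ):ℝ)^d ≤ (4*s) ^ ((d:ℝ)/2) := by
      have e1 : ((2*ρ):ℝ)^d = (4*ρ^2) ^ ((d:ℝ)/2) := by
        rw [show (4*ρ^2 : ℝ) = (2*ρ)^(2:ℕ) by ring]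
        rw [← Real.rpow_natCast (2*ρ) 2, ← Real.rpow_mul (by positivity)]
        rw [show ((2:ℕ):ℝ) * ((d:ℝ)/2) = (d:ℝ) by push_cast; ring]
        rw [Real.rpow_natCast]
      rw [e1]
      have h45 : (4*ρ^2:ℝ) ≤ 4*s := by linarith
      exact Real.rpow_le_rpow (by positivity) h45 (by positivity)
    have hden : 2*ρ^2*(2*ρ)^d ≤ 2*s*(4*s) ^ ((d:ℝ)/2) := by
      apply mul_le_mul (by linarith) h2ρd (by positivity) (by linarith)
    have hdenρ : (0:ℝ) < 2*ρ^2*(2*ρ)^d := by positivity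
    have h2pow : (1:ℝ) ≤ 2^(d+1) := by
      have := pow_le_pow_left₀ (by norm_num : (0:ℝ) ≤ 1) (by norm_num : (1:ℝ) ≤ 2) (d+1)
      simpa using this
    have hp2 : (0:ℝ) < 2^(d+1)*ρ^(d+1) := by
      exact mul_pos (pow_pos (by norm_num) _) hp1
    calc (2*s*(4*Real.pi*s) ^ ((d:ℝ)/2))⁻¹ * ((2*R + 6*R^3/s) * Real.exp (-(R^2/(8*s))))
        ≤ (2*s*(4*s) ^ ((d:ℝ)/2))⁻¹ * ((2*R + 6*R^3/s) * Real.exp (-(R^2/(8*s)))) := hstep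
      _ ≤ (2*ρ^2*(2*ρ)^d)⁻¹ * (1420*ρ) := by
          apply mul_le_mul (inv_anti₀ hdenρ hden) hNle hN0 (by positivity)
      _ = 1420 / (2^(d+1)*ρ^(d+1)) := by
          rw [show (2*ρ^2*(2*ρ)^d : ℝ) = 2^(d+1)*ρ^(d+1)*ρ by rw [mul_pow]; ring]
          rw [inv_mul_eq_div, mul_div_mul_right _ _ (ne_of_gt hρ)]
      _ ≤ 1420 / ρ^(d+1) := by
          apply div_le_div_of_nonneg_left (by norm_num) hp1
          have := mul_le_mul_of_nonneg_right h2pow hp1.le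
          linarith
      _ ≤ (1420 + Real.sqrt (2^(d+4) * M)) / ρ^(d+1) := by
          rw [div_le_div_iff_of_pos_right hp1]
          linarith
  · -- case ρ ≤ R
    have hpR : (0:ℝ) < R^(d+1) := pow_pos hR _
    have hcore : (2*s*(4*s) ^ ((d:ℝ)/2))⁻¹ * ((2*R + 6*R^3/s) * Real.exp (-(R^2/(8*s))))
        ≤ Real.sqrt (2^(d+4) * M) / R^(d+1) := by
      rw [inv_mul_eq_div, div_le_div_iff₀ hden1 hpR]
      apply my_sq_le (mul_nonneg hN0 hpR.le) (mul_nonneg hsqM0 hden1.le)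
      rw [mul_pow, mul_pow, hexpq, hcoef, mul_pow, mul_pow, hexp2, hsqM, mul_pow, hsqpow]
      have hRpow : (R^(d+1))^2 * R^2 = (R^2)^(d+2) := by
        rw [← pow_mul, ← pow_mul, ← pow_add]
        ring_nf
      have e8 : ((8:ℝ))^(d+2) = 2^(d+4) * 4^(d+1) := by
        rw [show (8:ℝ) = 2^3 by norm_num, show (4:ℝ) = 2^2 by norm_num,
          ← pow_mul, ← pow_mul, ← pow_add]
        congr 1; ring
      have hsc := my_scalar2 d q hq0.le
      have hsd : (0:ℝ) < s^(d+2) := pow_pos hs _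
      calc (2+48*q)^2*R^2*Real.exp (-(2*q)) * (R^(d+1))^2
          = ((2+48*q)^2*Real.exp (-(2*q))) * ((R^2)^(d+2)) := by rw [← hRpow]; ring
        _ = ((2+48*q)^2*Real.exp (-(2*q))) * (8^(d+2) * s^(d+2) * q^(d+2)) := by
            rw [hq8, mul_pow, mul_pow]
        _ = ((2+48*q)^2 * q^(d+2) * Real.exp (-(2*q))) * (8^(d+2) * s^(d+2)) := by ring
        _ ≤ M * (8^(d+2) * s^(d+2)) := by
            apply mul_le_mul_of_nonneg_right hsc (by positivity)
        _ = 2^(d+4)*M * ((2*s)^2*(4*s)^d) := by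
            rw [e8, mul_pow, mul_pow]
            ring
    have hRρ : ρ^(d+1) ≤ R^(d+1) := pow_le_pow_left₀ hρ.le hc2 _
    calc (2*s*(4*Real.pi*s) ^ ((d:ℝ)/2))⁻¹ * ((2*R + 6*R^3/s) * Real.exp (-(R^2/(8*s))))
        ≤ Real.sqrt (2^(d+4) * M) / R^(d+1) := hstep.trans hcore
      _ ≤ Real.sqrt (2^(d+4) * M) / ρ^(d+1) := by
          exact div_le_div_of_nonneg_left hsqM0 hp1 hRρ
      _ ≤ (1420 + Real.sqrt (2^(d+4) * M)) / ρ^(d+1) := by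
          rw [div_le_div_iff_of_pos_right hp1]
          linarith

set_option maxHeartbeats 2000000 in
/-- Lemma `f bound 2`: pointwise bound on the Neumann boundary datum of the half-space
approximation, at `(s,y)` in the dyadic annulus `I(2ρ) \ I(ρ)`, in terms of `ε` and the
oscillation of the normal vector. -/
theorem stmt_1 (d : ℕ) (hd : 2 ≤ d) :
    ∃ C : ℝ, 0 < C ∧
      ∀ (Ω : Set (EuclideanSpace ℝ (Fin d))), IsOpen Ω →
      ∀ ε r : ℝ, ε ∈ Set.Ioc (0:ℝ) (1/4) → 0 < r →
      ∀ ν₀ : EuclideanSpace ℝ (Fin d), ‖ν₀‖ = 1 →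
      ∀ x₀ ∈ frontier Ω,
      (∀ z ∈ frontier Ω ∩ ball x₀ r, |⟪z - x₀, ν₀⟫_ℝ| ≤ ε * ‖z - x₀‖) →
      ∀ x ∈ Ω, ⟪x - x₀, ν₀⟫_ℝ < -Real.sqrt (1 - ε ^ 2) * ‖x - x₀‖ → x ∈ ball x₀ (r / 2) →
      ∀ ρ : ℝ, ρ ∈ Set.Ioc (0:ℝ) (r / 2) →
      ∀ n : EuclideanSpace ℝ (Fin d), ‖n‖ = 1 →
      ∀ s : ℝ, s ∈ Set.Ioo (0:ℝ) (4 * ρ ^ 2) →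
      ∀ y ∈ frontier Ω, ‖y - x₀‖ < 2 * ρ →
      (ρ ^ 2 ≤ s ∨ ρ ≤ ‖y - x₀‖) →
      |(2 * s * (4 * Real.pi * s) ^ ((d:ℝ) / 2))⁻¹ *
          ⟪n, Real.exp (-(‖x - y‖ ^ 2 / (4 * s))) • (y - x)
              + Real.exp (-(‖((2:ℝ) • x₀ - x) - y‖ ^ 2 / (4 * s))) •
                  (y - ((2:ℝ) • x₀ - x))⟫_ℝ|
        ≤ C * (ε + ‖n - ν₀‖) / ρ ^ (d + 1) := by
  obtain ⟨C, hCpos, hkey⟩ := my_key d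
  refine ⟨C, hCpos, ?_⟩
  intro Ω hΩ ε r hε hr ν₀ hν x₀ hx₀ hgood x hxΩ hcone hxball ρ hρ n hn s hs y hyF hyu hcase
  obtain ⟨hε0, hε4⟩ := hε
  obtain ⟨hρ0, hρr⟩ := hρ
  obtain ⟨hs0, hs4⟩ := hs
  have hδ0 : (0:ℝ) ≤ ‖n - ν₀‖ := norm_nonneg _
  -- basic quantities
  set t := ‖x - x₀‖ with htdef
  set u := ‖y - x₀‖ with hudef
  have ht' : (0:ℝ) ≤ t := norm_nonneg _
  have hu' : (0:ℝ) ≤ u := norm_nonneg _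
  have hx₀Ω : x₀ ∉ Ω := by
    rw [hΩ.frontier_eq] at hx₀
    exact hx₀.2
  have hxne : x ≠ x₀ := fun h => hx₀Ω (h ▸ hxΩ)
  have ht0 : 0 < t := by
    rw [htdef]
    exact norm_sub_pos_iff.mpr hxne
  set R := Real.sqrt (t^2 + u^2) with hRdef
  have hRsq : R^2 = t^2 + u^2 := Real.sq_sqrt (by positivity)
  have hR0 : 0 < R := Real.sqrt_pos.mpr (by nlinarith [sq_nonneg u])
  have htR : t ≤ R := my_sq_le ht' hR0.le (by nlinarith [sq_nonneg u])
  have huR : u ≤ R := my_sq_le hu' hR0.le (by nlinarith [sq_nonneg t])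
  -- good point applied at y
  have hyball : y ∈ frontier Ω ∩ ball x₀ r := by
    refine ⟨hyF, ?_⟩
    rw [mem_ball, dist_eq_norm]
    have : 2*ρ ≤ r := by linarith
    rw [← hudef]; linarith
  have hyu' : |⟪y - x₀, ν₀⟫_ℝ| ≤ ε * u := hgood y hyball
  -- inner product of x-x₀ with y-x₀
  set c := ⟪x - x₀, ν₀⟫_ℝ with hc
  set c' := ⟪y - x₀, ν₀⟫_ℝ with hc'
  have hct : |c| ≤ t := by
    have h := abs_real_inner_le_norm (x - x₀) ν₀
    rw [hν, mul_one] at h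
    exact h
  have h1e : (0:ℝ) ≤ 1 - ε^2 := by nlinarith
  have hc2 : (1 - ε^2)*t^2 ≤ c^2 := by
    have h1 : Real.sqrt (1-ε^2)*t ≤ -c := by linarith [hcone.le]
    have h2 : (0:ℝ) ≤ Real.sqrt (1-ε^2)*t := mul_nonneg (Real.sqrt_nonneg _) ht'
    calc (1-ε^2)*t^2 = (Real.sqrt (1-ε^2)*t)^2 := by
          rw [mul_pow, Real.sq_sqrt h1e]
      _ ≤ (-c)^2 := pow_le_pow_left₀ h2 h1 2
      _ = c^2 := by ring
  have hvtan : ‖(x - x₀) - c • ν₀‖ ≤ ε*t := by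
    apply my_sq_le (norm_nonneg _) (mul_nonneg hε0.le ht')
    have hexp := my_tan_norm ν₀ (x - x₀) hν
    rw [← hc, ← htdef] at hexp
    rw [hexp, mul_pow]
    nlinarith [hc2]
  have hwtan : ‖(y - x₀) - c' • ν₀‖ ≤ u := by
    apply my_sq_le (norm_nonneg _) hu'
    have hexp := my_tan_norm ν₀ (y - x₀) hν
    rw [← hc', ← hudef] at hexp
    rw [hexp]
    nlinarith [sq_nonneg c']
  have hid : ⟪x - x₀, y - x₀⟫_ℝ = c*c' + ⟪(x - x₀) - c • ν₀, (y - x₀) - c' • ν₀⟫_ℝ := by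
    have h := my_inner_decomp ν₀ (x - x₀) (y - x₀) hν
    rw [← hc, ← hc'] at h
    exact h
  have hvw : |⟪x - x₀, y - x₀⟫_ℝ| ≤ 2*ε*t*u := by
    rw [hid]
    calc |c*c' + ⟪(x - x₀) - c • ν₀, (y - x₀) - c' • ν₀⟫_ℝ|
        ≤ |c * c'| + |⟪(x - x₀) - c • ν₀, (y - x₀) - c' • ν₀⟫_ℝ| := abs_add_le _ _
      _ ≤ |c| * |c'| + ‖(x - x₀) - c • ν₀‖*‖(y - x₀) - c' • ν₀‖ := by
          rw [abs_mul]
          exact add_le_add le_rfl (abs_real_inner_le_norm _ _)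
      _ ≤ t*(ε*u) + (ε*t)*u := by
          apply add_le_add
          · exact mul_le_mul hct hyu' (abs_nonneg _) ht'
          · exact mul_le_mul hvtan hwtan (norm_nonneg _) (mul_nonneg hε0.le ht')
      _ = 2*ε*t*u := by ring
  -- squares of distances
  have ha2 : ‖x - y‖^2 = t^2 + u^2 - 2*⟪x - x₀, y - x₀⟫_ℝ := by
    rw [show x - y = (x - x₀) - (y - x₀) from by abel, norm_sub_sq_real, ← htdef, ← hudef]
    ring
  have hb2 : ‖((2:ℝ) • x₀ - x) - y‖^2 = t^2 + u^2 + 2*⟪x - x₀, y - x₀⟫_ℝ := by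
    rw [show ((2:ℝ) • x₀ - x) - y = -((x - x₀) + (y - x₀)) from by module, norm_neg,
      norm_add_sq_real, ← htdef, ← hudef]
    ring
  set A := ‖x - y‖^2/(4*s) with hAdef
  set B := ‖((2:ℝ) • x₀ - x) - y‖^2/(4*s) with hBdef
  set q := (t^2 + u^2)/(8*s) with hqdef
  have habs : |⟪x - x₀, y - x₀⟫_ℝ| ≤ (t^2+u^2)/4 := by
    have h1 : 2*ε*t*u ≤ t*u/2 := by nlinarith [mul_nonneg ht' hu']
    have h2 : t*u/2 ≤ (t^2+u^2)/4 := by nlinarith [sq_nonneg (t - u)]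
    linarith
  have habs1 : ⟪x - x₀, y - x₀⟫_ℝ ≤ (t^2+u^2)/4 := (abs_le.mp habs).2
  have habs2 : -((t^2+u^2)/4) ≤ ⟪x - x₀, y - x₀⟫_ℝ := (abs_le.mp habs).1
  have h8s : (0:ℝ) < 8*s := by linarith
  have hAq : q ≤ A := by
    have e : A - q = ((t^2+u^2) - 4*⟪x - x₀, y - x₀⟫_ℝ)/(8*s) := by
      rw [hAdef, hqdef, ha2]
      field_simp
      ring
    have h0 : 0 ≤ A - q := by
      rw [e]
      apply div_nonneg _ h8s.le
      linarith only [habs1]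
    linarith only [h0]
  have hBq : q ≤ B := by
    have e : B - q = ((t^2+u^2) + 4*⟪x - x₀, y - x₀⟫_ℝ)/(8*s) := by
      rw [hBdef, hqdef, hb2]
      field_simp
      ring
    have h0 : 0 ≤ B - q := by
      rw [e]
      apply div_nonneg _ h8s.le
      linarith only [habs2]
    linarith only [h0]
  have hq0 : 0 < q := by
    rw [hqdef]
    exact div_pos (add_pos_of_pos_of_nonneg (pow_pos ht0 2) (sq_nonneg u)) (by linarith only [hs0])
  have hX0 : (0:ℝ) < Real.exp (-q) := Real.exp_pos _
  have heA : Real.exp (-A) ≤ Real.exp (-q) := Real.exp_le_exp.mpr (by linarith only [hAq])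
  have heB : Real.exp (-B) ≤ Real.exp (-q) := Real.exp_le_exp.mpr (by linarith only [hBq])
  have hBA : B - A = ⟪x - x₀, y - x₀⟫_ℝ / s := by
    rw [hAdef, hBdef, ha2, hb2]
    field_simp
    ring
  have hDle : |Real.exp (-B) - Real.exp (-A)| ≤ (2*ε*t*u/s) * Real.exp (-q) := by
    refine (my_expdiff hAq hBq).trans ?_
    apply mul_le_mul_of_nonneg_right _ hX0.le
    rw [hBA, abs_div, abs_of_pos hs0]
    exact div_le_div_of_nonneg_right hvw hs0.le
  -- decompose vector
  have hE2 : Real.exp (-A) • (y - x) + Real.exp (-B) • (y - ((2:ℝ) • x₀ - x))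
      = (Real.exp (-A) + Real.exp (-B)) • (y - x₀)
        + (Real.exp (-B) - Real.exp (-A)) • (x - x₀) := by
    module
  have hsplit : ∀ z : EuclideanSpace ℝ (Fin d), ⟪n, z⟫_ℝ = ⟪ν₀, z⟫_ℝ + ⟪n - ν₀, z⟫_ℝ := by
    intro z
    rw [← inner_add_left]
    congr 1
    abel
  set Z := (Real.exp (-A) + Real.exp (-B)) • (y - x₀)
        + (Real.exp (-B) - Real.exp (-A)) • (x - x₀) with hZdef
  have hSle : Real.exp (-A) + Real.exp (-B) ≤ 2 * Real.exp (-q) := by linarith only [heA, heB]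
  have hS0 : (0:ℝ) ≤ Real.exp (-A) + Real.exp (-B) :=
    by positivity
  -- the three bounds
  have hb1 : |(Real.exp (-A) + Real.exp (-B)) * ⟪ν₀, y - x₀⟫_ℝ|
      ≤ 2 * Real.exp (-q) * (ε*u) := by
    rw [abs_mul, abs_of_nonneg hS0, real_inner_comm, ← hc']
    exact mul_le_mul hSle hyu' (abs_nonneg _) (by positivity)
  have hQG : t^2*u/s ≤ R^3/s := by
    apply div_le_div_of_nonneg_right _ hs0.le
    calc t^2*u ≤ R^2*R := by
          apply mul_le_mul (pow_le_pow_left₀ ht' htR 2) huR hu' (by positivity)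
      _ = R^3 := by ring
  have hQ0 : (0:ℝ) ≤ t^2*u/s := div_nonneg (by positivity) hs0.le
  have hb2' : |(Real.exp (-B) - Real.exp (-A)) * ⟪ν₀, x - x₀⟫_ℝ|
      ≤ 2*ε*Real.exp (-q)*(t^2*u/s) := by
    rw [abs_mul]
    have hιt : |⟪ν₀, x - x₀⟫_ℝ| ≤ t := by
      rw [real_inner_comm, ← hc]; exact hct
    calc |Real.exp (-B) - Real.exp (-A)| * |⟪ν₀, x - x₀⟫_ℝ|
        ≤ ((2*ε*t*u/s) * Real.exp (-q)) * t := by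
          apply mul_le_mul hDle hιt (abs_nonneg _)
          have : (0:ℝ) ≤ 2*ε*t*u/s := div_nonneg (by positivity) hs0.le
          positivity
      _ = 2*ε*Real.exp (-q)*(t^2*u/s) := by ring
  have hZnorm : ‖Z‖ ≤ 2*Real.exp (-q)*u + (2*ε*t*u/s)*Real.exp (-q)*t := by
    rw [hZdef]
    calc ‖(Real.exp (-A) + Real.exp (-B)) • (y - x₀)
        + (Real.exp (-B) - Real.exp (-A)) • (x - x₀)‖
        ≤ ‖(Real.exp (-A) + Real.exp (-B)) • (y - x₀)‖
          + ‖(Real.exp (-B) - Real.exp (-A)) • (x - x₀)‖ := norm_add_le _ _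
      _ = (Real.exp (-A) + Real.exp (-B)) * u + |Real.exp (-B) - Real.exp (-A)| * t := by
          rw [norm_smul, norm_smul, Real.norm_eq_abs, Real.norm_eq_abs, abs_of_nonneg hS0,
            ← htdef, ← hudef]
      _ ≤ 2*Real.exp (-q)*u + (2*ε*t*u/s)*Real.exp (-q)*t := by
          apply add_le_add
          · exact mul_le_mul_of_nonneg_right hSle hu'
          · exact mul_le_mul_of_nonneg_right hDle ht'
  have hb3 : |⟪n - ν₀, Z⟫_ℝ| ≤ ‖n - ν₀‖ * (2*Real.exp (-q)*u + 2*ε*Real.exp (-q)*(t^2*u/s)) := by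
    calc |⟪n - ν₀, Z⟫_ℝ| ≤ ‖n - ν₀‖ * ‖Z‖ := abs_real_inner_le_norm _ _
      _ ≤ ‖n - ν₀‖ * (2*Real.exp (-q)*u + 2*ε*Real.exp (-q)*(t^2*u/s)) := by
          apply mul_le_mul_of_nonneg_left _ hδ0
          refine hZnorm.trans (le_of_eq ?_)
          ring
  -- total inner-product bound
  have hinner : |⟪n, Real.exp (-A) • (y - x) + Real.exp (-B) • (y - ((2:ℝ) • x₀ - x))⟫_ℝ|
      ≤ (ε + ‖n - ν₀‖) * ((2*R + 6*R^3/s) * Real.exp (-q)) := by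
    rw [hE2, hsplit Z]
    have hZin : ⟪ν₀, Z⟫_ℝ = (Real.exp (-A) + Real.exp (-B)) * ⟪ν₀, y - x₀⟫_ℝ
        + (Real.exp (-B) - Real.exp (-A)) * ⟪ν₀, x - x₀⟫_ℝ := by
      rw [hZdef, inner_add_right, real_inner_smul_right, real_inner_smul_right]
    calc |⟪ν₀, Z⟫_ℝ + ⟪n - ν₀, Z⟫_ℝ|
        ≤ |⟪ν₀, Z⟫_ℝ| + |⟪n - ν₀, Z⟫_ℝ| := abs_add_le _ _
      _ ≤ (|(Real.exp (-A) + Real.exp (-B)) * ⟪ν₀, y - x₀⟫_ℝ|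
            + |(Real.exp (-B) - Real.exp (-A)) * ⟪ν₀, x - x₀⟫_ℝ|) + |⟪n - ν₀, Z⟫_ℝ| := by
          refine add_le_add ?_ le_rfl
          rw [hZin]
          exact abs_add_le _ _
      _ ≤ (2 * Real.exp (-q) * (ε*u) + 2*ε*Real.exp (-q)*(t^2*u/s))
            + ‖n - ν₀‖ * (2*Real.exp (-q)*u + 2*ε*Real.exp (-q)*(t^2*u/s)) := by
          exact add_le_add (add_le_add hb1 hb2') hb3
      _ ≤ (ε + ‖n - ν₀‖) * ((2*R + 6*R^3/s) * Real.exp (-q)) := by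
          have hG0 : (0:ℝ) ≤ R^3/s := div_nonneg (by positivity) hs0.le
          have p1 : 0 ≤ ε * Real.exp (-q) * (R - u) :=
            mul_nonneg (mul_nonneg hε0.le hX0.le) (by linarith only [huR])
          have p2 : 0 ≤ ε * Real.exp (-q) * (3*(R^3/s) - t^2*u/s) :=
            mul_nonneg (mul_nonneg hε0.le hX0.le) (by linarith only [hQG, hG0])
          have p3 : 0 ≤ ‖n - ν₀‖ * Real.exp (-q) * (R - u) :=
            mul_nonneg (mul_nonneg hδ0 hX0.le) (by linarith only [huR])
          have p4 : 0 ≤ ‖n - ν₀‖ * Real.exp (-q) * (3*(R^3/s) - ε*(t^2*u/s)) := by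
            apply mul_nonneg (mul_nonneg hδ0 hX0.le)
            have h1 : ε*(t^2*u/s) ≤ t^2*u/s :=
              mul_le_of_le_one_left hQ0 (by linarith only [hε4])
            linarith only [h1, hQG, hG0]
          have hdiff : (ε + ‖n - ν₀‖) * ((2*R + 6*R^3/s) * Real.exp (-q))
              - ((2 * Real.exp (-q) * (ε*u) + 2*ε*Real.exp (-q)*(t^2*u/s))
                + ‖n - ν₀‖ * (2*Real.exp (-q)*u + 2*ε*Real.exp (-q)*(t^2*u/s)))
              = 2*(ε * Real.exp (-q) * (R - u))
                + 2*(ε * Real.exp (-q) * (3*(R^3/s) - t^2*u/s))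
                + 2*(‖n - ν₀‖ * Real.exp (-q) * (R - u))
                + 2*(‖n - ν₀‖ * Real.exp (-q) * (3*(R^3/s) - ε*(t^2*u/s))) := by
            ring
          linarith only [p1, p2, p3, p4, hdiff]
  -- prefactor
  have hpi : (0:ℝ) < 4*Real.pi*s := mul_pos (by positivity) hs0
  have hPpos : (0:ℝ) < 2*s*(4*Real.pi*s) ^ ((d:ℝ)/2) :=
    mul_pos (by linarith) (Real.rpow_pos_of_pos hpi _)
  have hkapp := hkey ρ s R hρ0 hs0 hR0 hs4 (hcase.imp_right fun h => h.trans huR)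
  rw [hRsq, ← hqdef] at hkapp
  calc |(2 * s * (4 * Real.pi * s) ^ ((d:ℝ) / 2))⁻¹ *
          ⟪n, Real.exp (-A) • (y - x) + Real.exp (-B) • (y - ((2:ℝ) • x₀ - x))⟫_ℝ|
      = (2 * s * (4 * Real.pi * s) ^ ((d:ℝ) / 2))⁻¹ *
          |⟪n, Real.exp (-A) • (y - x) + Real.exp (-B) • (y - ((2:ℝ) • x₀ - x))⟫_ℝ| := by
        rw [abs_mul, abs_of_pos (inv_pos.mpr hPpos)]
    _ ≤ (2 * s * (4 * Real.pi * s) ^ ((d:ℝ) / 2))⁻¹ *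
          ((ε + ‖n - ν₀‖) * ((2*R + 6*R^3/s) * Real.exp (-q))) :=
        mul_le_mul_of_nonneg_left hinner (inv_pos.mpr hPpos).le
    _ = (ε + ‖n - ν₀‖) *
          ((2*s*(4*Real.pi*s) ^ ((d:ℝ)/2))⁻¹ * ((2*R + 6*R^3/s) * Real.exp (-q))) := by
        ring
    _ ≤ (ε + ‖n - ν₀‖) * (C / ρ^(d+1)) := by
        apply mul_le_mul_of_nonneg_left hkapp (by linarith)
    _ = C * (ε + ‖n - ν₀‖) / ρ ^ (d + 1) := by ring
end

section
/- Let d ≥ 2. There is a constant C depending only on d with the following property. Let Ω ⊆ ℝ^d be open, ε ∈ (0,1/4], r > 0, ν₀ a unit vector, and x₀ ∈ ∂Ω an (ε,r)-good point with respect to ν₀. Let x ∈ Ω ∩ Γ_r(x₀,ε), set x* := 2x₀ − x, let ρ ∈ (0, r] with ρ ≤ 4·d_Ω(x), let n ∈ ℝ^d be a unit vector, let s ∈ (0, ρ²), and let y ∈ ∂Ω ∩ B_ρ(x₀). Then | (2s(4πs)^{d/2})^{−1} · n·( (y−x)·e^{−|x−y|²/(4s)} + (y−x*)·e^{−|x*−y|²/(4s)}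 ) | ≤ C·(ε + |n−ν₀|)·d_Ω(x)^{−(d+1)}. -/
open MeasureTheory Metric Set
open scoped InnerProductSpace

private lemma aux_texp (t : ℝ) (ht : 0 ≤ t) : t * Real.exp (-t) ≤ 1 := by
  have h1 := Real.add_one_le_exp t
  have h2 : Real.exp t * Real.exp (-t) = 1 := by rw [← Real.exp_add]; simp
  nlinarith [Real.exp_pos (-t), Real.exp_pos t]

private lemma aux_expdiff (α β m : ℝ) (hα : m ≤ α) (hβ : m ≤ β) :
    |Real.exp (-α) - Real.exp (-β)| ≤ |α - β| * Real.exp (-m) := by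
  wlog h : α ≤ β generalizing α β
  · rw [abs_sub_comm, abs_sub_comm α β]; exact this β α hβ hα (le_of_not_ge h)
  have e1 : Real.exp (-β) ≤ Real.exp (-α) := Real.exp_le_exp.2 (by linarith)
  have e3 : Real.exp (-α) ≤ Real.exp (-m) := Real.exp_le_exp.2 (by linarith)
  have habs1 : |Real.exp (-α) - Real.exp (-β)| = Real.exp (-α) - Real.exp (-β) :=
    abs_of_nonneg (by linarith)
  have habs2 : |α - β| = β - α := by rw [abs_sub_comm]; exact abs_of_nonneg (by linarith)
  rw [habs1, habs2]
  have key : Real.exp (-α) - Real.exp (-β) ≤ (β - α) * Real.exp (-α) := by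
    have h1 : 1 - (β - α) ≤ Real.exp (-(β - α)) := by
      have := Real.add_one_le_exp (-(β - α)); linarith
    have h2 : Real.exp (-β) = Real.exp (-α) * Real.exp (-(β - α)) := by
      rw [← Real.exp_add]; ring_nf
    nlinarith [Real.exp_pos (-α)]
  nlinarith [Real.exp_pos (-α)]

private lemma aux_rpow (v k : ℝ) (hv : 0 ≤ v) (hk : 1 ≤ k) :
    v ^ k ≤ (16 * k) ^ k * Real.exp (v / 16) := by
  have hk0 : 0 < k := by linarith
  have h16k : (0:ℝ) < 16 * k := by linarith
  set w := v / (16 * k) with hw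
  have hw0 : 0 ≤ w := div_nonneg hv h16k.le
  have hvw : v = 16 * k * w := by rw [hw]; field_simp
  have h1 : w ≤ Real.exp w := by have := Real.add_one_le_exp w; linarith
  have h2 : w ^ k ≤ Real.exp w ^ k := Real.rpow_le_rpow hw0 h1 hk0.le
  have h3 : Real.exp w ^ k = Real.exp (v / 16) := by
    rw [← Real.exp_mul]
    congr 1
    rw [hvw]; field_simp
  calc v ^ k = (16 * k) ^ k * w ^ k := by
        rw [← Real.mul_rpow h16k.le hw0, ← hvw]
    _ ≤ (16 * k) ^ k * Real.exp (v / 16) := by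
        rw [← h3]; exact mul_le_mul_of_nonneg_left h2 (Real.rpow_nonneg h16k.le k)

private lemma aux_inner {E : Type*} [NormedAddCommGroup E] [InnerProductSpace ℝ E]
    (u z ν : E) (ε : ℝ) (hε : 0 ≤ ε) (hν : ‖ν‖ = 1)
    (hu : (1 - ε ^ 2) * ‖u‖ ^ 2 ≤ ⟪u, ν⟫_ℝ ^ 2)
    (hz : |⟪z, ν⟫_ℝ| ≤ ε * ‖z‖) :
    |⟪u, z⟫_ℝ| ≤ 2 * ε * (‖u‖ * ‖z‖) := by
  set c := ⟪u, ν⟫_ℝ with hc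
  set e := ⟪z, ν⟫_ℝ with he
  have hνν : ⟪ν, ν⟫_ℝ = 1 := by
    rw [real_inner_self_eq_norm_sq, hν]; norm_num
  have key : ⟪u - c • ν, z - e • ν⟫_ℝ = ⟪u, z⟫_ℝ - c * e := by
    simp only [inner_sub_left, inner_sub_right, real_inner_smul_left, real_inner_smul_right, hνν,
      ← hc, ← he]
    have hcomm : ⟪ν, z⟫_ℝ = e := by rw [he, real_inner_comm]
    rw [hcomm]; ring
  have hv2 : ‖u - c • ν‖ ^ 2 = ‖u‖ ^ 2 - c ^ 2 := by
    rw [norm_sub_sq_real, real_inner_smul_right, ← hc, norm_smul, hν, Real.norm_eq_abs]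
    rw [mul_pow, sq_abs]
    ring
  have hw2 : ‖z - e • ν‖ ^ 2 = ‖z‖ ^ 2 - e ^ 2 := by
    rw [norm_sub_sq_real, real_inner_smul_right, ← he, norm_smul, hν, Real.norm_eq_abs]
    rw [mul_pow, sq_abs]
    ring
  have hvn : ‖u - c • ν‖ ≤ ε * ‖u‖ := by
    have h2 : ‖u - c • ν‖ ^ 2 ≤ (ε * ‖u‖) ^ 2 := by rw [hv2]; nlinarith
    exact le_of_pow_le_pow_left₀ two_ne_zero (by positivity) h2
  have hwn : ‖z - e • ν‖ ≤ ‖z‖ := by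
    have h2 : ‖z - e • ν‖ ^ 2 ≤ ‖z‖ ^ 2 := by rw [hw2]; nlinarith
    exact le_of_pow_le_pow_left₀ two_ne_zero (norm_nonneg _) h2
  have hcs := abs_real_inner_le_norm (u - c • ν) (z - e • ν)
  have hcn : |c| ≤ ‖u‖ := by
    have := abs_real_inner_le_norm u ν; rw [hν, mul_one] at this; rwa [hc]
  have final : |⟪u, z⟫_ℝ| ≤ ‖u - c • ν‖ * ‖z - e • ν‖ + |c| * |e| := by
    have h1 : ⟪u, z⟫_ℝ = ⟪u - c • ν, z - e • ν⟫_ℝ + c * e := by rw [key]; ring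
    rw [h1]
    exact (abs_add_le _ _).trans (by rw [abs_mul]; exact add_le_add hcs le_rfl)
  have hmul : ‖u - c • ν‖ * ‖z - e • ν‖ ≤ ε * ‖u‖ * ‖z‖ :=
    mul_le_mul hvn hwn (norm_nonneg _) (by positivity)
  have hmul2 : |c| * |e| ≤ ‖u‖ * (ε * ‖z‖) :=
    mul_le_mul hcn hz (abs_nonneg _) (norm_nonneg _)
  nlinarith

set_option maxHeartbeats 1000000 in
/-- Lemma `f bound 3`: pointwise bound on the Neumann boundary datum of the half-space
approximation, at `(s,y) ∈ I(ρ)` with `ρ ≤ 4 d_Ω(x)`, in terms of `ε`, the oscillation of the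
normal, and `d_Ω(x)`. -/
theorem stmt_2 (d : ℕ) (hd : 2 ≤ d) :
    ∃ C : ℝ, 0 < C ∧
      ∀ (Ω : Set (EuclideanSpace ℝ (Fin d))), IsOpen Ω →
      ∀ ε r : ℝ, ε ∈ Set.Ioc (0:ℝ) (1/4) → 0 < r →
      ∀ ν₀ : EuclideanSpace ℝ (Fin d), ‖ν₀‖ = 1 →
      ∀ x₀ ∈ frontier Ω,
      (∀ z ∈ frontier Ω ∩ ball x₀ r, |⟪z - x₀, ν₀⟫_ℝ| ≤ ε * ‖z - x₀‖) →
      ∀ x ∈ Ω, ⟪x - x₀, ν₀⟫_ℝ < -Real.sqrt (1 - ε ^ 2) * ‖x - x₀‖ → x ∈ ball x₀ (r / 2) →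
      ∀ ρ : ℝ, ρ ∈ Set.Ioc (0:ℝ) r → ρ ≤ 4 * Metric.infDist x Ωᶜ →
      ∀ n : EuclideanSpace ℝ (Fin d), ‖n‖ = 1 →
      ∀ s : ℝ, s ∈ Set.Ioo (0:ℝ) (ρ ^ 2) →
      ∀ y ∈ frontier Ω, y ∈ ball x₀ ρ →
      |(2 * s * (4 * Real.pi * s) ^ ((d:ℝ) / 2))⁻¹ *
          ⟪n, Real.exp (-(‖x - y‖ ^ 2 / (4 * s))) • (y - x)
              + Real.exp (-(‖((2:ℝ) • x₀ - x) - y‖ ^ 2 / (4 * s))) •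
                  (y - ((2:ℝ) • x₀ - x))⟫_ℝ|
        ≤ C * (ε + ‖n - ν₀‖) / Metric.infDist x Ωᶜ ^ (d + 1) := by
  set k : ℝ := (d : ℝ) / 2 + 1 with hkdef
  have hk1 : (1:ℝ) ≤ k := by
    have : (0:ℝ) ≤ (d:ℝ) / 2 := by positivity
    rw [hkdef]; linarith
  have h16k0 : (0:ℝ) < 16 * k := by linarith
  have hCk : (0:ℝ) < (16 * k) ^ k := Real.rpow_pos_of_pos h16k0 k
  refine ⟨68 * (16 * k) ^ k, by positivity, ?_⟩
  intro Ω hΩ ε r hε hr ν₀ hν₀ x₀ hx₀ hgood x hxΩ hxcone hxball ρ hρ hρδ n hn s hs y hyF hyB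
  obtain ⟨hε0, hε4⟩ := hε
  obtain ⟨hρ0, hρr⟩ := hρ
  obtain ⟨hs0, hs2⟩ := hs
  set δ := Metric.infDist x Ωᶜ with hδdef
  have hx₀c : x₀ ∈ Ωᶜ := by
    have h1 := hx₀
    rw [hΩ.frontier_eq] at h1
    exact h1.2
  have hδ0 : 0 < δ :=
    (hΩ.isClosed_compl.notMem_iff_infDist_pos ⟨x₀, hx₀c⟩).1 (by simp [hxΩ])
  set u := x - x₀ with hu
  set z := y - x₀ with hz
  set A := ‖u‖ with hA
  set B := ‖z‖ with hB
  set η := ‖n - ν₀‖ with hη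
  have hA0 : 0 ≤ A := norm_nonneg _
  have hB0 : 0 ≤ B := norm_nonneg _
  have hη0 : 0 ≤ η := norm_nonneg _
  have hδA : δ ≤ A := by
    have h1 := Metric.infDist_le_dist_of_mem (x := x) hx₀c
    rwa [dist_eq_norm] at h1
  have hB4δ : B ≤ 4 * δ := by
    have h1 : dist y x₀ < ρ := mem_ball.mp hyB
    rw [dist_eq_norm] at h1
    have h2 : ‖y - x₀‖ = B := rfl
    rw [h2] at h1
    linarith
  have hzε : |⟪z, ν₀⟫_ℝ| ≤ ε * B :=
    hgood y ⟨hyF, mem_ball.mpr (lt_of_lt_of_le (mem_ball.mp hyB) hρr)⟩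
  have hsq : (1 - ε ^ 2) * A ^ 2 ≤ ⟪u, ν₀⟫_ℝ ^ 2 := by
    have h1 : (0:ℝ) ≤ 1 - ε ^ 2 := by nlinarith only [hε0, hε4]
    have h2 := Real.sq_sqrt h1
    have h3 := Real.sqrt_nonneg (1 - ε ^ 2)
    have h5 : Real.sqrt (1 - ε ^ 2) * A ≤ -⟪u, ν₀⟫_ℝ := by linarith only [hxcone]
    have h6 : (0:ℝ) ≤ Real.sqrt (1 - ε ^ 2) * A := mul_nonneg h3 hA0
    have h7 := mul_le_mul h5 h5 h6 (le_trans h6 h5)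
    have h8 : Real.sqrt (1 - ε ^ 2) * A * (Real.sqrt (1 - ε ^ 2) * A)
        = (1 - ε ^ 2) * A ^ 2 := by
      rw [show Real.sqrt (1 - ε ^ 2) * A * (Real.sqrt (1 - ε ^ 2) * A)
          = Real.sqrt (1 - ε ^ 2) ^ 2 * A ^ 2 from by ring, h2]
    have h9 : -⟪u, ν₀⟫_ℝ * -⟪u, ν₀⟫_ℝ = ⟪u, ν₀⟫_ℝ ^ 2 := by ring
    rw [h8, h9] at h7
    exact h7
  have hq : |⟪u, z⟫_ℝ| ≤ 2 * ε * (A * B) := aux_inner u z ν₀ ε hε0.le hν₀ hsq hzε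
  set q := ⟪u, z⟫_ℝ with hqdef
  obtain ⟨hq1, hq2⟩ := abs_le.mp hq
  -- vector identities
  have hyx : y - x = z - u := by rw [hz, hu]; abel
  have hyxs : y - ((2:ℝ) • x₀ - x) = z + u := by rw [two_smul, hz, hu]; abel
  have hxy : x - y = u - z := by rw [hz, hu]; abel
  have hxsy : ((2:ℝ) • x₀ - x) - y = -(u + z) := by rw [two_smul, hz, hu]; abel
  -- norm squares
  have hnsub : ‖u - z‖ ^ 2 = A ^ 2 - 2 * q + B ^ 2 := norm_sub_sq_real u z
  have hnadd : ‖u + z‖ ^ 2 = A ^ 2 + 2 * q + B ^ 2 := norm_add_sq_real u z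
  have hquarter : (0:ℝ) ≤ (1/4 - ε) * (A * B) :=
    mul_nonneg (by linarith only [hε4]) (mul_nonneg hA0 hB0)
  have hsub_lb : A ^ 2 / 2 ≤ ‖u - z‖ ^ 2 := by
    rw [hnsub]
    linarith only [sq_nonneg (A - B), hquarter, hq1, hq2, sq_nonneg B]
  have hadd_lb : A ^ 2 / 2 ≤ ‖u + z‖ ^ 2 := by
    rw [hnadd]
    linarith only [sq_nonneg (A - B), hquarter, hq1, hq2, sq_nonneg B]
  have hδ2A2 : δ ^ 2 ≤ A ^ 2 := by nlinarith only [hδA, hδ0.le]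
  -- exponent abbreviations
  set α := ‖x - y‖ ^ 2 / (4 * s) with hαdef
  set β := ‖((2:ℝ) • x₀ - x) - y‖ ^ 2 / (4 * s) with hβdef
  have hα : α = ‖u - z‖ ^ 2 / (4 * s) := by rw [hαdef, hxy]
  have hβ : β = ‖u + z‖ ^ 2 / (4 * s) := by rw [hβdef, hxsy, norm_neg]
  have hαm : A ^ 2 / (8 * s) ≤ α := by
    rw [hα, div_le_div_iff₀ (by positivity) (by positivity)]
    linarith only [mul_le_mul_of_nonneg_right hsub_lb hs0.le]
  have hβm : A ^ 2 / (8 * s) ≤ β := by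
    rw [hβ, div_le_div_iff₀ (by positivity) (by positivity)]
    linarith only [mul_le_mul_of_nonneg_right hadd_lb hs0.le]
  have hδ16A8 : δ ^ 2 / (16 * s) ≤ A ^ 2 / (8 * s) := by
    rw [div_le_div_iff₀ (by positivity) (by positivity)]
    linarith only [mul_le_mul_of_nonneg_right hδ2A2 hs0.le,
      mul_nonneg (sq_nonneg A) hs0.le]
  have hδ16α : δ ^ 2 / (16 * s) ≤ α := le_trans hδ16A8 hαm
  have hδ16β : δ ^ 2 / (16 * s) ≤ β := le_trans hδ16A8 hβm
  set E1 := Real.exp (-(δ ^ 2 / (16 * s))) with hE1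
  have hE10 : 0 < E1 := Real.exp_pos _
  have hea : Real.exp (-α) ≤ E1 := Real.exp_le_exp.2 (by linarith)
  have heb : Real.exp (-β) ≤ E1 := Real.exp_le_exp.2 (by linarith)
  have hea0 : 0 < Real.exp (-α) := Real.exp_pos _
  have heb0 : 0 < Real.exp (-β) := Real.exp_pos _
  -- inner product expansion
  have hX : ⟪n, Real.exp (-α) • (y - x) + Real.exp (-β) • (y - ((2:ℝ) • x₀ - x))⟫_ℝ
      = (Real.exp (-α) + Real.exp (-β)) * ⟪n, z⟫_ℝ
        + (Real.exp (-β) - Real.exp (-α)) * ⟪n, u⟫_ℝ := by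
    rw [hyx, hyxs]
    simp only [inner_add_right, inner_sub_right, real_inner_smul_right]
    ring
  have hN1 : |⟪n, z⟫_ℝ| ≤ (ε + η) * B := by
    have h1 : ⟪n, z⟫_ℝ = ⟪n - ν₀, z⟫_ℝ + ⟪ν₀, z⟫_ℝ := by rw [inner_sub_left]; ring
    have h2 := abs_real_inner_le_norm (n - ν₀) z
    have h3 : |⟪ν₀, z⟫_ℝ| ≤ ε * B := by rwa [real_inner_comm]
    calc |⟪n, z⟫_ℝ| ≤ |⟪n - ν₀, z⟫_ℝ| + |⟪ν₀, z⟫_ℝ| := h1 ▸ abs_add_le _ _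
      _ ≤ η * B + ε * B := add_le_add h2 h3
      _ = (ε + η) * B := by ring
  have hN2 : |⟪n, u⟫_ℝ| ≤ A := by
    have h2 := abs_real_inner_le_norm n u
    rw [hn, one_mul] at h2
    exact h2
  -- difference of exponentials
  have hdiff : |Real.exp (-α) - Real.exp (-β)|
      ≤ (2 * ε * (A * B) / s) * Real.exp (-(A ^ 2 / (8 * s))) := by
    have h1 := aux_expdiff α β (A ^ 2 / (8 * s)) hαm hβm
    have h2 : |α - β| ≤ 2 * ε * (A * B) / s := by
      have h3 : α - β = -q / s := by
        rw [hα, hβ, hnsub, hnadd]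
        field_simp
        ring
      rw [h3, abs_div, abs_neg, abs_of_pos hs0]
      exact (div_le_div_iff_of_pos_right hs0).2 hq
    calc |Real.exp (-α) - Real.exp (-β)|
        ≤ |α - β| * Real.exp (-(A ^ 2 / (8 * s))) := h1
      _ ≤ (2 * ε * (A * B) / s) * Real.exp (-(A ^ 2 / (8 * s))) :=
          mul_le_mul_of_nonneg_right h2 (Real.exp_pos _).le
  -- key decay estimate
  have hkey2 : (A ^ 2 / s) * Real.exp (-(A ^ 2 / (8 * s))) ≤ 16 * E1 := by
    have hsplit : Real.exp (-(A ^ 2 / (8 * s)))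
        = Real.exp (-(A ^ 2 / (16 * s))) * Real.exp (-(A ^ 2 / (16 * s))) := by
      rw [← Real.exp_add]
      congr 1
      field_simp
      ring
    have ht := aux_texp (A ^ 2 / (16 * s)) (by positivity)
    have h3 : A ^ 2 / s = 16 * (A ^ 2 / (16 * s)) := by
      field_simp
    have h4 : Real.exp (-(A ^ 2 / (16 * s))) ≤ E1 := by
      apply Real.exp_le_exp.2
      have : δ ^ 2 / (16 * s) ≤ A ^ 2 / (16 * s) :=
        (div_le_div_iff_of_pos_right (by positivity)).2 hδ2A2
      linarith only [this]
    have he16 : 0 < Real.exp (-(A ^ 2 / (16 * s))) := Real.exp_pos _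
    rw [hsplit, h3]
    linarith only [mul_le_mul_of_nonneg_right ht he16.le, h4]
  -- total bound on the inner product
  have hXb : |⟪n, Real.exp (-α) • (y - x) + Real.exp (-β) • (y - ((2:ℝ) • x₀ - x))⟫_ℝ|
      ≤ 136 * ((ε + η) * δ) * E1 := by
    rw [hX]
    have t1 : |(Real.exp (-α) + Real.exp (-β)) * ⟪n, z⟫_ℝ| ≤ (2 * E1) * ((ε + η) * B) := by
      rw [abs_mul]
      apply mul_le_mul _ hN1 (abs_nonneg _) (by positivity)
      rw [abs_of_pos (by positivity)]
      linarith
    have t2 : |(Real.exp (-β) - Real.exp (-α)) * ⟪n, u⟫_ℝ|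
        ≤ ((2 * ε * (A * B) / s) * Real.exp (-(A ^ 2 / (8 * s)))) * A := by
      rw [abs_mul, abs_sub_comm]
      exact mul_le_mul hdiff hN2 (abs_nonneg _) (by positivity)
    have t3 : ((2 * ε * (A * B) / s) * Real.exp (-(A ^ 2 / (8 * s)))) * A
        ≤ 2 * ε * B * (16 * E1) := by
      have expand : ((2 * ε * (A * B) / s) * Real.exp (-(A ^ 2 / (8 * s)))) * A
          = 2 * ε * B * ((A ^ 2 / s) * Real.exp (-(A ^ 2 / (8 * s)))) := by
        field_simp
      rw [expand]
      exact mul_le_mul_of_nonneg_left hkey2 (by positivity)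
    have hεB : ε * B ≤ (ε + η) * (4 * δ) := mul_le_mul (by linarith) hB4δ hB0 (by positivity)
    have c1 : (ε + η) * B ≤ (ε + η) * (4 * δ) := mul_le_mul_of_nonneg_left hB4δ (by positivity)
    calc |(Real.exp (-α) + Real.exp (-β)) * ⟪n, z⟫_ℝ
          + (Real.exp (-β) - Real.exp (-α)) * ⟪n, u⟫_ℝ|
        ≤ |(Real.exp (-α) + Real.exp (-β)) * ⟪n, z⟫_ℝ|
          + |(Real.exp (-β) - Real.exp (-α)) * ⟪n, u⟫_ℝ| := abs_add_le _ _
      _ ≤ (2 * E1) * ((ε + η) * B) + 2 * ε * B * (16 * E1) := add_le_add t1 (t2.trans t3)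
      _ ≤ (2 * E1) * ((ε + η) * (4 * δ)) + 2 * ((ε + η) * (4 * δ)) * (16 * E1) := by
          have c2 : (2 * E1) * ((ε + η) * B) ≤ (2 * E1) * ((ε + η) * (4 * δ)) :=
            mul_le_mul_of_nonneg_left c1 (by positivity)
          have c3 : 2 * ε * B * (16 * E1) ≤ 2 * ((ε + η) * (4 * δ)) * (16 * E1) := by
            calc 2 * ε * B * (16 * E1) = 32 * E1 * (ε * B) := by ring
              _ ≤ 32 * E1 * ((ε + η) * (4 * δ)) :=
                  mul_le_mul_of_nonneg_left hεB (by positivity)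
              _ = 2 * ((ε + η) * (4 * δ)) * (16 * E1) := by ring
          linarith
      _ = 136 * ((ε + η) * δ) * E1 := by ring
  -- prefactor bounds
  have hpi := Real.pi_gt_three
  have hP0 : (0:ℝ) < 2 * s * (4 * Real.pi * s) ^ ((d:ℝ) / 2) := by positivity
  have hP : 2 * s ^ k ≤ 2 * s * (4 * Real.pi * s) ^ ((d:ℝ) / 2) := by
    have h1 : (4 * Real.pi * s) ^ ((d:ℝ) / 2)
        = (4 * Real.pi) ^ ((d:ℝ) / 2) * s ^ ((d:ℝ) / 2) := by
      rw [Real.mul_rpow (by positivity) hs0.le]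
    have h2 : (1:ℝ) ≤ (4 * Real.pi) ^ ((d:ℝ) / 2) :=
      Real.one_le_rpow (by linarith only [hpi]) (by positivity)
    have h3 : s ^ k = s * s ^ ((d:ℝ) / 2) := by
      rw [hkdef, Real.rpow_add hs0, Real.rpow_one]
      ring
    have h4 : (0:ℝ) < s ^ ((d:ℝ) / 2) := Real.rpow_pos_of_pos hs0 _
    rw [h1, h3]
    calc 2 * (s * s ^ ((d:ℝ) / 2)) = (2 * s * s ^ ((d:ℝ) / 2)) * 1 := by ring
      _ ≤ (2 * s * s ^ ((d:ℝ) / 2)) * ((4 * Real.pi) ^ ((d:ℝ) / 2)) :=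
          mul_le_mul_of_nonneg_left h2 (by positivity)
      _ = 2 * s * ((4 * Real.pi) ^ ((d:ℝ) / 2) * s ^ ((d:ℝ) / 2)) := by ring
  -- power estimate
  have hδpow : δ ^ (d + 2) * E1 ≤ (16 * k) ^ k * s ^ k := by
    set v := δ ^ 2 / s with hv
    have hv0 : 0 < v := by positivity
    have hδ2v : δ ^ 2 = s * v := by rw [hv]; field_simp
    have e1 : (δ:ℝ) ^ (d + 2) = ((δ:ℝ) ^ 2) ^ k := by
      rw [← Real.rpow_natCast δ (d + 2), ← Real.rpow_natCast δ 2, ← Real.rpow_mul hδ0.le]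
      congr 1
      rw [hkdef]
      push_cast
      ring
    have e3 : ((δ:ℝ) ^ 2) ^ k = s ^ k * v ^ k := by
      rw [hδ2v, Real.mul_rpow hs0.le hv0.le]
    have e4 : E1 = Real.exp (-(v / 16)) := by
      rw [hE1]
      congr 1
      rw [hv]
      field_simp
    have h2 := aux_rpow v k hv0.le hk1
    rw [e1, e3, e4]
    have step : s ^ k * v ^ k * Real.exp (-(v / 16))
        ≤ s ^ k * ((16 * k) ^ k * Real.exp (v / 16)) * Real.exp (-(v / 16)) := by
      have h5 : (0:ℝ) ≤ s ^ k := Real.rpow_nonneg hs0.le k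
      have h6 : (0:ℝ) < Real.exp (-(v / 16)) := Real.exp_pos _
      exact mul_le_mul_of_nonneg_right (mul_le_mul_of_nonneg_left h2 h5) h6.le
    have step2 : s ^ k * ((16 * k) ^ k * Real.exp (v / 16)) * Real.exp (-(v / 16))
        = (16 * k) ^ k * s ^ k := by
      have hh : Real.exp (v / 16) * Real.exp (-(v / 16)) = 1 := by
        rw [← Real.exp_add]; simp
      calc s ^ k * ((16 * k) ^ k * Real.exp (v / 16)) * Real.exp (-(v / 16))
          = (16 * k) ^ k * s ^ k * (Real.exp (v / 16) * Real.exp (-(v / 16))) := by ring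
        _ = (16 * k) ^ k * s ^ k := by rw [hh, mul_one]
    exact step.trans_eq step2
  -- final assembly
  have hδd1 : (0:ℝ) < δ ^ (d + 1) := pow_pos hδ0 _
  rw [abs_mul, abs_inv, abs_of_pos hP0, inv_mul_eq_div, div_le_div_iff₀ hP0 hδd1]
  calc |⟪n, Real.exp (-α) • (y - x) + Real.exp (-β) • (y - ((2:ℝ) • x₀ - x))⟫_ℝ| * δ ^ (d + 1)
      ≤ (136 * ((ε + η) * δ) * E1) * δ ^ (d + 1) := mul_le_mul_of_nonneg_right hXb hδd1.le
    _ = 136 * (ε + η) * (δ ^ (d + 2) * E1) := by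
        rw [show d + 2 = (d + 1) + 1 from rfl, pow_succ]
        ring
    _ ≤ 136 * (ε + η) * ((16 * k) ^ k * s ^ k) :=
        mul_le_mul_of_nonneg_left hδpow (by positivity)
    _ = 68 * (16 * k) ^ k * (ε + η) * (2 * s ^ k) := by ring
    _ ≤ 68 * (16 * k) ^ k * (ε + η) * (2 * s * (4 * Real.pi * s) ^ ((d:ℝ) / 2)) :=
        mul_le_mul_of_nonneg_left hP (by positivity)
end

section
/- Let d ≥ 2, Ω ⊆ ℝ^d be open, ε ∈ (0,1/4], r > 0, ν a unit vector, and let x₀ ∈ ∂Ω be an (ε,r)-good point with respect to ν. Then for every x ∈ Ω ∩ Γ_r(x₀,ε) and every t > 0 one has 0 ≤ e^{−d_Ω(x)²/t} − e^{−|x−x₀|²/t} ≤ 4ε·e^{−d_Ω(x)²/(2t)}. -/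
/-!
Let `y` be a point of `∂Ω` nearest to `x`, so `|x - y| = d_Ω(x) =: D`, and let `R := |x - x₀|`.
Since `D ≤ R`, the point `y` lies in `B_r(x₀)`, so it is confined to the flat double cone around
`x₀`, while `x` lies in the narrow cone `Γ` around `-ν`. Comparing the `ν`-components of
`x - x₀ = (x - y) + (y - x₀)` gives `(1 - ε - ε²) R < (1 + ε) D`, i.e. `R / D` is close to `1`.

Writing `e^{-D²/t} - e^{-R²/t} = e^{-D²/(2t)} (e^{-X} - e^{-Y})` with `X = D²/(2t)` and
`Y = (2R² - D²)/(2t)`, the bound `u e^{-u} ≤ 1/e` gives `e^{-X} - e^{-Y} ≤ log (Y / X) / e`,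
which is independent of `t`; for `R / D` as above it is at most `4ε`.
-/

open MeasureTheory Metric Set Real
open scoped InnerProductSpace

lemma exp_neg_sub_exp_neg_le_log_div {x y : ℝ} (hx : 0 < x) (hxy : x ≤ y) :
    exp (-x) - exp (-y) ≤ log (y / x) / exp 1 := by
  have hy : 0 < y := hx.trans_le hxy
  have hpointwise : ∀ u ∈ Icc x y, exp (-u) ≤ (exp 1)⁻¹ * u⁻¹ := fun u hu => by
    have hu : 0 < u := hx.trans_le hu.1
    rw [exp_neg, ← mul_inv]
    exact inv_anti₀ (by positivity) (by simpa [mul_comm] using exp_one_mul_le_exp (x := u))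
  have hint : IntervalIntegrable (fun u : ℝ => (exp 1)⁻¹ * u⁻¹) volume x y :=
    (intervalIntegral.intervalIntegrable_inv (fun u hu => ?_) continuousOn_id).const_mul _
  calc exp (-x) - exp (-y) = ∫ u in x..y, exp (-u) := by
        rw [intervalIntegral.integral_comp_neg (fun u => exp u), integral_exp]
    _ ≤ ∫ u in x..y, (exp 1)⁻¹ * u⁻¹ :=
        intervalIntegral.integral_mono_on hxy
          ((by fun_prop : Continuous fun u : ℝ => exp (-u)).intervalIntegrable _ _) hint hpointwise
    _ = log (y / x) / exp 1 := by
        rw [intervalIntegral.integral_const_mul, integral_inv_of_pos hx hy, inv_mul_eq_div]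
  · rw [uIcc_of_le hxy] at hu
    exact (hx.trans_le hu.1).ne'

lemma exp_neg_sq_div_sub_exp_neg_sq_div_le {D R t : ℝ} (hD : 0 < D) (hDR : D ≤ R) (ht : 0 < t) :
    exp (-D ^ 2 / t) - exp (-R ^ 2 / t)
      ≤ exp (-D ^ 2 / (2 * t)) * (log (2 * (R / D) ^ 2 - 1) / exp 1) := by
  have hX : 0 < D ^ 2 / (2 * t) := by positivity
  have hXY : D ^ 2 / (2 * t) ≤ (2 * R ^ 2 - D ^ 2) / (2 * t) := by
    gcongr
    nlinarith
  have hsplit (a : ℝ) :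
      exp (-a / t) = exp (-D ^ 2 / (2 * t)) * exp (-((2 * a - D ^ 2) / (2 * t))) := by
    rw [← exp_add]
    congr 1
    field_simp
    ring
  have hratio : (2 * R ^ 2 - D ^ 2) / (2 * t) / (D ^ 2 / (2 * t)) = 2 * (R / D) ^ 2 - 1 := by
    field_simp
  rw [hsplit (D ^ 2), hsplit (R ^ 2), ← mul_sub, ← hratio, show 2 * D ^ 2 - D ^ 2 = D ^ 2 by ring]
  gcongr
  exact exp_neg_sub_exp_neg_le_log_div hX hXY

lemma log_two_mul_sq_sub_one_le {ρ : ℝ} (hρ : 1 ≤ ρ) :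
    log (2 * ρ ^ 2 - 1) ≤ 2 * (ρ - 1) + (1 - (ρ ^ 2)⁻¹) := by
  have hρ0 : 0 < ρ := one_pos.trans_le hρ
  have hinv : (ρ ^ 2)⁻¹ ≤ 1 := inv_le_one_of_one_le₀ (one_le_pow₀ hρ)
  rw [show 2 * ρ ^ 2 - 1 = ρ ^ 2 * (2 - (ρ ^ 2)⁻¹) by field_simp,
    log_mul (by positivity) (by linarith), log_pow]
  have hlogρ := log_le_sub_one_of_pos hρ0
  have hlog := log_le_sub_one_of_pos (x := 2 - (ρ ^ 2)⁻¹) (by linarith)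
  push_cast
  linarith

lemma log_two_mul_sq_sub_one_le_four_mul_exp_one {ε ρ : ℝ} (hε : ε ∈ Ioc (0 : ℝ) (1 / 4))
    (hρ : 1 ≤ ρ) (hρε : (1 - ε - ε ^ 2) * ρ ≤ 1 + ε) :
    log (2 * ρ ^ 2 - 1) ≤ 4 * ε * exp 1 := by
  obtain ⟨hε0, hε4⟩ := hε
  have hp : 0 < 1 - ε - ε ^ 2 := by nlinarith
  have hρ' : ρ ≤ (1 + ε) / (1 - ε - ε ^ 2) := by rwa [le_div_iff₀ hp, mul_comm]
  have hmono : 2 * (ρ - 1) + (1 - (ρ ^ 2)⁻¹)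
      ≤ 2 * ((1 + ε) / (1 - ε - ε ^ 2) - 1) + (1 - (((1 + ε) / (1 - ε - ε ^ 2)) ^ 2)⁻¹) := by
    gcongr
  -- at `ε = 1/4` the left side is about `2.33`, so `exp 1 > 2.5` suffices
  have hpoly : 2 * ((1 + ε) / (1 - ε - ε ^ 2) - 1) + (1 - (((1 + ε) / (1 - ε - ε ^ 2)) ^ 2)⁻¹)
      ≤ 10 * ε := by
    rw [div_pow, inv_div]
    field_simp
    nlinarith [mul_pos hε0 hε0, mul_pos (mul_pos hε0 hε0) hε0]
  have he : (2.5 : ℝ) < exp 1 := lt_trans (by norm_num) exp_one_gt_d9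
  nlinarith [log_two_mul_sq_sub_one_le hρ]

lemma infDist_compl_le_dist_of_mem_frontier {X : Type*} [PseudoMetricSpace X] {Ω : Set X}
    {x x₀ : X} (hx₀ : x₀ ∈ frontier Ω) : infDist x Ωᶜ ≤ dist x x₀ := by
  rw [← infDist_closure]
  exact infDist_le_dist_of_mem (frontier_subset_closure (frontier_compl Ω ▸ hx₀))

section InnerProductSpace

variable {E : Type*} [NormedAddCommGroup E] [InnerProductSpace ℝ E]

lemma sub_mul_norm_sub_lt_one_add_mul_norm_sub {x y x₀ ν : E} {c ε : ℝ} (hε : 0 ≤ ε)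
    (hν : ‖ν‖ = 1) (hy : |⟪y - x₀, ν⟫_ℝ| ≤ ε * ‖y - x₀‖)
    (hx : ⟪x - x₀, ν⟫_ℝ < -c * ‖x - x₀‖) :
    (c - ε) * ‖x - x₀‖ < (1 + ε) * ‖x - y‖ := by
  have hsplit : ⟪x - x₀, ν⟫_ℝ = ⟪x - y, ν⟫_ℝ + ⟪y - x₀, ν⟫_ℝ := by
    rw [← inner_add_left, sub_add_sub_cancel]
  have hxy : -‖x - y‖ ≤ ⟪x - y, ν⟫_ℝ := by
    simpa [hν] using neg_le_of_abs_le (abs_real_inner_le_norm (x - y) ν)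
  have htri : ‖y - x₀‖ ≤ ‖x - y‖ + ‖x - x₀‖ := by
    simpa [norm_sub_rev y x] using norm_sub_le_norm_sub_add_norm_sub y x x₀
  nlinarith [neg_le_of_abs_le hy]

lemma sub_mul_norm_sub_lt_one_add_mul_infDist_compl [FiniteDimensional ℝ E] {Ω : Set E}
    {x₀ x ν : E} {ε r : ℝ} (hε : 0 ≤ ε) (hν : ‖ν‖ = 1) (hx₀ : x₀ ∈ frontier Ω)
    (hgood : ∀ z ∈ frontier Ω ∩ ball x₀ r, |⟪z - x₀, ν⟫_ℝ| ≤ ε * ‖z - x₀‖)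
    (hxΩ : x ∈ Ω) (hxΓ : ⟪x - x₀, ν⟫_ℝ < -√(1 - ε ^ 2) * ‖x - x₀‖)
    (hxB : x ∈ ball x₀ (r / 2)) :
    (√(1 - ε ^ 2) - ε) * ‖x - x₀‖ < (1 + ε) * infDist x Ωᶜ := by
  have hΩ : Ω ≠ univ := by
    rintro rfl
    simp at hx₀
  obtain ⟨y, hy, hyd⟩ := exists_mem_frontier_infDist_compl_eq_dist hxΩ hΩ
  have hyB : y ∈ ball x₀ r := by
    have hDR := infDist_compl_le_dist_of_mem_frontier (x := x) hx₀
    have := dist_triangle y x x₀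
    rw [mem_ball] at hxB ⊢
    rw [dist_comm y x] at this
    linarith
  rw [hyd, dist_eq_norm]
  exact sub_mul_norm_sub_lt_one_add_mul_norm_sub hε hν (hgood y ⟨hy, hyB⟩) hxΓ

end InnerProductSpace

theorem stmt_3_general (d : ℕ) (Ω : Set (EuclideanSpace ℝ (Fin d)))
    (ε r : ℝ) (hε : ε ∈ Set.Ioc (0:ℝ) (1/4))
    (ν : EuclideanSpace ℝ (Fin d)) (hν : ‖ν‖ = 1)
    (x₀ : EuclideanSpace ℝ (Fin d)) (hx₀ : x₀ ∈ frontier Ω)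
    (hgood : ∀ z ∈ frontier Ω ∩ ball x₀ r, |⟪z - x₀, ν⟫_ℝ| ≤ ε * ‖z - x₀‖)
    (x : EuclideanSpace ℝ (Fin d)) (hxΩ : x ∈ Ω)
    (hxΓ : ⟪x - x₀, ν⟫_ℝ < -Real.sqrt (1 - ε ^ 2) * ‖x - x₀‖)
    (hxB : x ∈ ball x₀ (r / 2))
    (t : ℝ) (ht : 0 < t) :
    0 ≤ Real.exp (-(Metric.infDist x Ωᶜ) ^ 2 / t) - Real.exp (-‖x - x₀‖ ^ 2 / t) ∧
    Real.exp (-(Metric.infDist x Ωᶜ) ^ 2 / t) - Real.exp (-‖x - x₀‖ ^ 2 / t)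
      ≤ 4 * ε * Real.exp (-(Metric.infDist x Ωᶜ) ^ 2 / (2 * t)) := by
  set D := infDist x Ωᶜ
  set R := ‖x - x₀‖
  obtain ⟨hε0, hε4⟩ := hε
  have hDR : D ≤ R := (infDist_compl_le_dist_of_mem_frontier hx₀).trans_eq (dist_eq_norm x x₀)
  have hgap := sub_mul_norm_sub_lt_one_add_mul_infDist_compl hε0.le hν hx₀ hgood hxΩ hxΓ hxB
  have hsqrt : 1 - ε ^ 2 ≤ √(1 - ε ^ 2) := le_sqrt_self_iff.mpr (by nlinarith)
  have hRD : (1 - ε - ε ^ 2) * R < (1 + ε) * D := by nlinarith [norm_nonneg (x - x₀)]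
  have hD : 0 < D :=
    pos_of_mul_pos_right ((mul_nonneg (by nlinarith) (norm_nonneg _)).trans_lt hRD) (by linarith)
  refine ⟨sub_nonneg.mpr (exp_le_exp.mpr (by gcongr)), ?_⟩
  have hρ : 1 ≤ R / D := (one_le_div hD).mpr hDR
  have hρε : (1 - ε - ε ^ 2) * (R / D) ≤ 1 + ε := by
    rw [← mul_div_assoc, div_le_iff₀ hD]
    exact hRD.le
  calc exp (-D ^ 2 / t) - exp (-R ^ 2 / t)
      ≤ exp (-D ^ 2 / (2 * t)) * (log (2 * (R / D) ^ 2 - 1) / exp 1) :=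
        exp_neg_sq_div_sub_exp_neg_sq_div_le hD hDR ht
    _ ≤ exp (-D ^ 2 / (2 * t)) * (4 * ε * exp 1 / exp 1) := by
        gcongr
        exact log_two_mul_sq_sub_one_le_four_mul_exp_one ⟨hε0, hε4⟩ hρ hρε
    _ = 4 * ε * exp (-D ^ 2 / (2 * t)) := by
        rw [mul_div_cancel_right₀ _ (exp_pos 1).ne']
        ring

/-- For an `(ε,r)`-good point `x₀ ∈ ∂Ω` with `ε ∈ (0,1/4]` and `x ∈ Ω ∩ Γ_r(x₀,ε)`, one has
`0 ≤ e^{−d_Ω(x)²/t} − e^{−|x−x₀|²/t} ≤ 4ε e^{−d_Ω(x)²/(2t)}` for all `t > 0`. -/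
theorem stmt_3 (d : ℕ) (hd : 2 ≤ d) (Ω : Set (EuclideanSpace ℝ (Fin d))) (hΩ : IsOpen Ω)
    (ε r : ℝ) (hε : ε ∈ Set.Ioc (0:ℝ) (1/4)) (hr : 0 < r)
    (ν : EuclideanSpace ℝ (Fin d)) (hν : ‖ν‖ = 1)
    (x₀ : EuclideanSpace ℝ (Fin d)) (hx₀ : x₀ ∈ frontier Ω)
    (hgood : ∀ z ∈ frontier Ω ∩ ball x₀ r, |⟪z - x₀, ν⟫_ℝ| ≤ ε * ‖z - x₀‖)
    (x : EuclideanSpace ℝ (Fin d)) (hxΩ : x ∈ Ω)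
    (hxΓ : ⟪x - x₀, ν⟫_ℝ < -Real.sqrt (1 - ε ^ 2) * ‖x - x₀‖)
    (hxB : x ∈ ball x₀ (r / 2))
    (t : ℝ) (ht : 0 < t) :
    0 ≤ Real.exp (-(Metric.infDist x Ωᶜ) ^ 2 / t) - Real.exp (-‖x - x₀‖ ^ 2 / t) ∧
    Real.exp (-(Metric.infDist x Ωᶜ) ^ 2 / t) - Real.exp (-‖x - x₀‖ ^ 2 / t)
      ≤ 4 * ε * Real.exp (-(Metric.infDist x Ωᶜ) ^ 2 / (2 * t)) :=
  stmt_3_general d Ω ε r hε ν hν x₀ hx₀ hgood x hxΩ hxΓ hxB t ht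
end

section
/- Let d ≥ 2. There is a constant c > 0 depending only on d with the following property. Let Ω ⊆ ℝ^d be open and convex, let y ∈ Ω and R > 0 satisfy B_R(y) ⊆ Ω, let x₀ ∈ ∂Ω with |x₀ − y| = R, and set ν₀ := (x₀ − y)/R. If 0 < s < R, if x ∈ ∂Ω with |x − x₀| < s, and if ν is a unit vector such that (z − x)·ν < 0 for all z ∈ Ω, then ν₀·ν ≥ 1 − c·(s/R)² and |ν₀ − ν| ≤ √(2c)·(s/R). -/
open MeasureTheory Metric Set
open scoped InnerProductSpace

set_option maxHeartbeats 1000000 in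
/-- Lemma `supremum variation of normal`: quantitative closeness of any outer normal of a
supporting hyperplane at a nearby boundary point to the normal `ν₀ = (x₀ − y)/R` at a point
`x₀` touched from inside by a ball of radius `R`. -/
theorem stmt_5 (d : ℕ) (hd : 2 ≤ d) :
    ∃ c : ℝ, 0 < c ∧
      ∀ (Ω : Set (EuclideanSpace ℝ (Fin d))), IsOpen Ω → Convex ℝ Ω →
      ∀ y ∈ Ω, ∀ R : ℝ, 0 < R → ball y R ⊆ Ω →
      ∀ x₀ ∈ frontier Ω, ‖x₀ - y‖ = R →
      ∀ s : ℝ, 0 < s → s < R →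
      ∀ x ∈ frontier Ω, ‖x - x₀‖ < s →
      ∀ ν : EuclideanSpace ℝ (Fin d), ‖ν‖ = 1 →
      (∀ z ∈ Ω, ⟪z - x, ν⟫_ℝ < 0) →
      1 - c * (s / R) ^ 2 ≤ ⟪R⁻¹ • (x₀ - y), ν⟫_ℝ ∧
      ‖R⁻¹ • (x₀ - y) - ν‖ ≤ Real.sqrt (2 * c) * (s / R) := by
  refine ⟨2, by norm_num, ?_⟩
  intro Ω hΩ hconv y hy R hR hball x₀ hx₀ hx₀y s hs hsR x hx hxx₀ ν hν hsupp
  have hRne : R ≠ 0 := ne_of_gt hR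
  -- Step A: R ≤ ⟪x - y, ν⟫
  have stepA : R ≤ ⟪x - y, ν⟫_ℝ := by
    have key : ∀ t : ℝ, 0 < t → t < R → t < ⟪x - y, ν⟫_ℝ := by
      intro t ht htR
      have hz : y + t • ν ∈ ball y R := by
        simp [mem_ball, dist_eq_norm, norm_smul, abs_of_pos ht, hν, htR]
      have := hsupp _ (hball hz)
      have hexp : ⟪y + t • ν - x, ν⟫_ℝ = -⟪x - y, ν⟫_ℝ + t := by
        rw [show y + t • ν - x = (y - x) + t • ν by abel]
        rw [inner_add_left, real_inner_smul_left, real_inner_self_eq_norm_sq, hν,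
          show y - x = -(x - y) by abel, inner_neg_left]
        ring
      linarith [hexp ▸ this]
    rcases le_or_gt R ⟪x - y, ν⟫_ℝ with h | h
    · exact h
    · have h2 := key (R/2) (by linarith) (by linarith)
      by_contra hcon
      push_neg at hcon
      -- from key:  for all t in (0,R), t < inner; take t approaching R
      have : ∀ t : ℝ, t < R → t ≤ ⟪x - y, ν⟫_ℝ := by
        intro t htR
        rcases le_or_gt t 0 with h0 | h0
        · linarith
        · exact le_of_lt (key t h0 htR)
      linarith [this ((R + ⟪x - y, ν⟫_ℝ)/2) (by linarith)]
  -- Step B: supporting hyperplane at x₀ with normal x₀ - y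
  have stepB : ∀ z ∈ Ω, ⟪z - x₀, x₀ - y⟫_ℝ ≤ 0 := by
    intro z hz
    by_contra hcon
    push_neg at hcon
    set δ : ℝ := ⟪z - x₀, x₀ - y⟫_ℝ with hδ
    set t : ℝ := min (1/2) (δ / (‖z - y‖^2 + 1)) with htdef
    have hzy1 : (0:ℝ) < ‖z - y‖^2 + 1 := by positivity
    have ht0 : 0 < t := lt_min (by norm_num) (div_pos hcon hzy1)
    have ht1 : t < 1 := lt_of_le_of_lt (min_le_left _ _) (by norm_num)
    have htle : t * (‖z - y‖^2 + 1) ≤ δ := by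
      have := min_le_right (1/2 : ℝ) (δ / (‖z - y‖^2 + 1))
      calc t * (‖z - y‖^2 + 1) ≤ (δ / (‖z - y‖^2 + 1)) * (‖z - y‖^2 + 1) := by
            apply mul_le_mul_of_nonneg_right this (le_of_lt hzy1)
        _ = δ := by field_simp
    -- the point w on the segment
    set w : EuclideanSpace ℝ (Fin d) := y + (1 - t)⁻¹ • ((x₀ - y) - t • (z - y)) with hw
    have h1t : (0:ℝ) < 1 - t := by linarith
    have hwball : w ∈ ball y R := by
      rw [mem_ball, dist_eq_norm]
      have : w - y = (1 - t)⁻¹ • ((x₀ - y) - t • (z - y)) := by rw [hw]; abel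
      rw [this, norm_smul, Real.norm_eq_abs, abs_of_pos (inv_pos.mpr h1t)]
      rw [inv_mul_lt_iff₀ h1t]
      have hsq : ‖(x₀ - y) - t • (z - y)‖^2 = R^2 - 2*t*(δ + R^2) + t^2 * ‖z - y‖^2 := by
        rw [norm_sub_sq_real, real_inner_smul_right, norm_smul, Real.norm_eq_abs,
          abs_of_pos ht0, hx₀y]
        have : ⟪x₀ - y, z - y⟫_ℝ = δ + R^2 := by
          rw [hδ, real_inner_comm]
          rw [show z - y = (z - x₀) + (x₀ - y) by abel, inner_add_left,
            real_inner_self_eq_norm_sq, hx₀y]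
        rw [this]; ring
      have hlt : ‖(x₀ - y) - t • (z - y)‖^2 < (R * (1-t))^2 := by
        rw [hsq]
        nlinarith [sq_nonneg t, ht0, htle, hR]
      have hn1 : (0:ℝ) ≤ ‖(x₀ - y) - t • (z - y)‖ := norm_nonneg _
      have hn2 : (0:ℝ) < R * (1 - t) := mul_pos hR h1t
      nlinarith
    have hcomb : (1 - t) • w + t • z = x₀ := by
      rw [hw, smul_add, smul_smul, mul_inv_cancel₀ (ne_of_gt h1t), one_smul]
      module
    have : x₀ ∈ Ω := by
      rw [← hcomb]
      exact hconv (hball hwball) hz (le_of_lt h1t) (le_of_lt ht0) (by ring)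
    exact (hΩ.frontier_eq ▸ hx₀).2 this
  -- extend to closure: x ∈ frontier Ω ⊆ closure Ω
  have stepB' : ⟪x - x₀, x₀ - y⟫_ℝ ≤ 0 := by
    have hxcl : x ∈ closure Ω := frontier_subset_closure hx
    have hcl : closure Ω ⊆ {z | ⟪z - x₀, x₀ - y⟫_ℝ ≤ 0} := by
      apply closure_minimal stepB
      have : Continuous fun z : EuclideanSpace ℝ (Fin d) => ⟪z - x₀, x₀ - y⟫_ℝ :=
        (continuous_id.sub continuous_const).inner continuous_const
      exact isClosed_le this continuous_const
    exact hcl hxcl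
  -- Algebra
  set ν₀ : EuclideanSpace ℝ (Fin d) := R⁻¹ • (x₀ - y) with hν₀
  have hν₀norm : ‖ν₀‖ = 1 := by
    rw [hν₀, norm_smul, Real.norm_eq_abs, abs_of_pos (inv_pos.mpr hR), hx₀y]
    field_simp
  set a : ℝ := ⟪ν₀, ν⟫_ℝ with ha
  have ha1 : a ≤ 1 := by
    calc a ≤ ‖ν₀‖ * ‖ν‖ := real_inner_le_norm _ _
      _ = 1 := by rw [hν₀norm, hν]; ring
  have hinner : ⟪x₀ - y, ν⟫_ℝ = R * a := by
    rw [ha, hν₀, real_inner_smul_left]; field_simp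
  -- w := x - x₀
  have hsplit : ⟪x - x₀, ν⟫_ℝ = ⟪x - y, ν⟫_ℝ - R * a := by
    rw [← hinner, show x - x₀ = (x - y) - (x₀ - y) by abel, inner_sub_left]
  have hwν : R * (1 - a) ≤ ⟪x - x₀, ν⟫_ℝ := by rw [hsplit]; linarith
  -- linear bound : a > 0
  have hlin : ⟪x - x₀, ν⟫_ℝ ≤ ‖x - x₀‖ := by
    calc ⟪x - x₀, ν⟫_ℝ ≤ ‖x - x₀‖ * ‖ν‖ := real_inner_le_norm _ _
      _ = ‖x - x₀‖ := by rw [hν]; ring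
  have ha0 : 0 < a := by nlinarith
  -- key quadratic bound
  have hwν₀ : ⟪x - x₀, ν₀⟫_ℝ ≤ 0 := by
    rw [hν₀, real_inner_smul_right]
    exact mul_nonpos_of_nonneg_of_nonpos (le_of_lt (inv_pos.mpr hR)) stepB'
  have hdecomp : ⟪x - x₀, ν⟫_ℝ = ⟪x - x₀, ν - a • ν₀⟫_ℝ + a * ⟪x - x₀, ν₀⟫_ℝ := by
    rw [inner_sub_right, real_inner_smul_right]; ring
  have hνa : ‖ν - a • ν₀‖^2 = 1 - a^2 := by
    have hc : ⟪ν, ν₀⟫_ℝ = a := (real_inner_comm ν₀ ν).trans ha.symm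
    rw [norm_sub_sq_real, norm_smul, real_inner_smul_right, Real.norm_eq_abs,
      abs_of_pos ha0, hν, hν₀norm, hc]
    ring
  have hCS : ⟪x - x₀, ν - a • ν₀⟫_ℝ ≤ ‖x - x₀‖ * ‖ν - a • ν₀‖ := real_inner_le_norm _ _
  have hbound : ⟪x - x₀, ν⟫_ℝ ≤ s * ‖ν - a • ν₀‖ := by
    rw [hdecomp]
    have h1 : a * ⟪x - x₀, ν₀⟫_ℝ ≤ 0 := mul_nonpos_of_nonneg_of_nonpos (le_of_lt ha0) hwν₀
    have h2 : ‖x - x₀‖ * ‖ν - a • ν₀‖ ≤ s * ‖ν - a • ν₀‖ :=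
      mul_le_mul_of_nonneg_right (le_of_lt hxx₀) (norm_nonneg _)
    linarith
  -- R(1-a) ≤ s √(1-a²), square it
  have hfin : R * (1 - a) ≤ s * ‖ν - a • ν₀‖ := le_trans hwν hbound
  have hsqfin : (R * (1 - a))^2 ≤ s^2 * (1 - a^2) := by
    have h1a : 0 ≤ 1 - a := by linarith
    have hL : 0 ≤ R * (1 - a) := mul_nonneg hR.le h1a
    calc (R * (1 - a))^2 ≤ (s * ‖ν - a • ν₀‖)^2 := by
          apply sq_le_sq' _ hfin; linarith [mul_nonneg hs.le (norm_nonneg (ν - a • ν₀))]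
      _ = s^2 * ‖ν - a • ν₀‖^2 := by ring
      _ = s^2 * (1 - a^2) := by rw [hνa]
  have hmain : 1 - 2 * (s/R)^2 ≤ a := by
    have hR2 : (0:ℝ) < R^2 := by positivity
    have h2 : R^2 * (1 - a) ≤ 2 * s^2 := by
      rcases le_or_gt (1 - a) 0 with h | h
      · nlinarith [sq_nonneg s]
      · nlinarith [hsqfin, mul_nonneg (sq_nonneg s) h.le, mul_pos h h]
    have h4 : (1 - a) ≤ 2 * s^2 / R^2 := (le_div_iff₀ hR2).mpr (by linarith)
    have h3 : (s/R)^2 = s^2 / R^2 := div_pow s R 2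
    rw [h3]
    have h5 : 2 * (s^2 / R^2) = 2 * s^2 / R^2 := by ring
    linarith [h5 ▸ h4]
  constructor
  · exact hmain
  · have hnsq : ‖ν₀ - ν‖^2 = 2 - 2*a := by
      rw [norm_sub_sq_real, hν₀norm, hν, ← ha]; ring
    have h4 : ‖ν₀ - ν‖^2 ≤ (2 * (s/R))^2 := by
      rw [hnsq]
      have hsR2 : (2*(s/R))^2 = 4 * (s/R)^2 := by ring
      rw [hsR2]; linarith
    have hsqrt : Real.sqrt (2 * 2) = 2 := by
      rw [show (2:ℝ)*2 = 2^2 by ring, Real.sqrt_sq (by norm_num : (0:ℝ) ≤ 2)]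
    rw [hsqrt]
    have hB : 0 ≤ 2 * (s/R) := by positivity
    nlinarith [norm_nonneg (ν₀ - ν)]
end

section
/- Let d ≥ 2 and let Ω ⊆ ℝ^d be a nonempty bounded open convex set. Then for every s ∈ (0, r_in(Ω)] one has (1 − s/r_in(Ω))^{d−1} · H^{d−1}(∂Ω) ≤ H^{d−1}({x ∈ Ω : d_Ω(x) = s}) ≤ H^{d−1}(∂Ω). -/
open MeasureTheory Metric Set
open scoped ENNReal NNReal RealInnerProductSpace

/-- The inradius `r_in(Ω) = sup_{x ∈ Ω} dist(x, Ωᶜ)`. -/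
noncomputable def inradius {d : ℕ} (Ω : Set (EuclideanSpace ℝ (Fin d))) : ℝ :=
  ⨆ x ∈ Ω, Metric.infDist x Ωᶜ

section InnerLemmas

variable {E : Type*} [NormedAddCommGroup E] [InnerProductSpace ℝ E]

/-- Uniqueness of the variational characterization of the metric projection. -/
private lemma proj_unique {K : Set E} {x a b : E} (ha : a ∈ K) (hb : b ∈ K)
    (h1 : ∀ w ∈ K, ⟪x - a, w - a⟫ ≤ 0) (h2 : ∀ w ∈ K, ⟪x - b, w - b⟫ ≤ 0) : a = b := by
  have e1 := h1 b hb
  have e2 := h2 a ha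
  have key : ⟪b - a, b - a⟫ ≤ 0 := by
    have hsplit : ⟪b - a, b - a⟫ = ⟪x - a, b - a⟫ - ⟪x - b, b - a⟫ := by
      rw [← inner_sub_left]; congr 1; abel
    have e2' : 0 ≤ ⟪x - b, b - a⟫ := by
      have : ⟪x - b, b - a⟫ = -⟪x - b, a - b⟫ := by
        rw [← inner_neg_right]; congr 1; abel
      linarith [this ▸ neg_nonneg.mpr e2]
    linarith
  have := real_inner_self_nonpos.mp key
  have : b = a := by rwa [sub_eq_zero] at this
  exact this.symm

/-- A `1`-Lipschitz metric projection onto a nonempty closed convex set. -/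
private lemma exists_lipschitz_proj [CompleteSpace E] {K : Set E} (hne : K.Nonempty)
    (hcl : IsClosed K) (hcv : Convex ℝ K) :
    ∃ P : E → E, LipschitzWith 1 P ∧ (∀ x, P x ∈ K) ∧
      ∀ x a, a ∈ K → (∀ w ∈ K, ⟪x - a, w - a⟫ ≤ 0) → P x = a := by
  have hex : ∀ x : E, ∃ v, v ∈ K ∧ ∀ w ∈ K, ⟪x - v, w - v⟫ ≤ 0 := fun x => by
    obtain ⟨v, hv, hmin⟩ := exists_norm_eq_iInf_of_complete_convex hne hcl.isComplete hcv x
    exact ⟨v, hv, (norm_eq_iInf_iff_real_inner_le_zero hcv hv).1 hmin⟩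
  choose P hPmem hPvar using hex
  have key : ∀ x y, ‖P x - P y‖ ≤ ‖x - y‖ := by
    intro x y
    set p := P x
    set q := P y
    have e1 : ⟪x - p, q - p⟫ ≤ 0 := hPvar x q (hPmem y)
    have e2 : ⟪y - q, p - q⟫ ≤ 0 := hPvar y p (hPmem x)
    have h3 : ⟪p - q - (x - y), p - q⟫ ≤ 0 := by
      have hrw : p - q - (x - y) = -(x - p) + (y - q) := by abel
      rw [hrw, inner_add_left, inner_neg_left]
      have : ⟪x - p, p - q⟫ = -⟪x - p, q - p⟫ := by
        rw [← inner_neg_right]; congr 1; abel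
      linarith
    have h4 : ⟪p - q, p - q⟫ ≤ ⟪x - y, p - q⟫ := by
      rw [inner_sub_left] at h3; linarith
    have h5 : ‖p - q‖ * ‖p - q‖ ≤ ‖x - y‖ * ‖p - q‖ := by
      calc ‖p - q‖ * ‖p - q‖ = ⟪p - q, p - q⟫ := (real_inner_self_eq_norm_mul_norm _).symm
        _ ≤ ⟪x - y, p - q⟫ := h4
        _ ≤ ‖x - y‖ * ‖p - q‖ := real_inner_le_norm _ _
    rcases eq_or_lt_of_le (norm_nonneg (p - q)) with h0 | h0
    · rw [← h0]; exact norm_nonneg _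
    · exact le_of_mul_le_mul_right h5 h0
  refine ⟨P, ?_, hPmem, fun x a ha hvar => proj_unique (hPmem x) ha (hPvar x) hvar⟩
  apply LipschitzWith.of_dist_le_mul
  intro x y
  rw [dist_eq_norm, dist_eq_norm, NNReal.coe_one, one_mul]
  exact key x y

/-- Every boundary point of a closed convex set in a finite-dimensional space admits an
outward supporting direction. -/
private lemma exists_support [CompleteSpace E] [FiniteDimensional ℝ E] {K : Set E}
    (hcl : IsClosed K) (hcv : Convex ℝ K) {a : E} (ha : a ∈ frontier K) :
    ∃ n : E, n ≠ 0 ∧ ∀ w ∈ K, ⟪n, w - a⟫ ≤ 0 := by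
  have haK : a ∈ K := hcl.closure_eq ▸ ha.1
  have hanotint : a ∉ interior K := ha.2
  by_cases hint : (interior K).Nonempty
  · obtain ⟨x₁, hx₁⟩ := hint
    obtain ⟨f, hf⟩ := geometric_hahn_banach_open_point hcv.interior isOpen_interior hanotint
    refine ⟨(InnerProductSpace.toDual ℝ E).symm f, ?_, ?_⟩
    · intro h0
      have hf0 : f = 0 := by
        have := congrArg (InnerProductSpace.toDual ℝ E) h0
        simpa using this
      have := hf x₁ hx₁
      rw [hf0] at this
      simp at this
    · intro w hw
      have hle : f w ≤ f a := by
        have htend : Filter.Tendsto (fun t : ℝ => t * f x₁ + (1 - t) * f w)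
            (nhdsWithin 0 (Set.Ioi 0)) (nhds (f w)) := by
          have hc : Continuous fun t : ℝ => t * f x₁ + (1 - t) * f w := by continuity
          have h2 := (hc.tendsto 0).mono_left (nhdsWithin_le_nhds (s := Set.Ioi 0))
          simpa using h2
        refine le_of_tendsto htend ?_
        filter_upwards [Ioo_mem_nhdsGT_of_mem (by constructor <;> norm_num : (0:ℝ) ∈ Set.Ico 0 1)]
          with t ht
        have hmem : t • x₁ + (1 - t) • w ∈ interior K :=
          hcv.combo_interior_closure_mem_interior hx₁ (subset_closure hw) ht.1
            (by linarith [ht.2]) (by ring)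
        have := hf _ hmem
        rw [map_add, f.map_smul, f.map_smul, smul_eq_mul, smul_eq_mul] at this
        linarith
      have : ⟪(InnerProductSpace.toDual ℝ E).symm f, w - a⟫ = f (w - a) :=
        InnerProductSpace.toDual_symm_apply
      rw [this, map_sub]
      linarith
  · have hKne : K.Nonempty := ⟨a, haK⟩
    have hspan : affineSpan ℝ K ≠ ⊤ := by
      intro h
      exact hint (hcv.interior_nonempty_iff_affineSpan_eq_top.2 h)
    have hdir : (affineSpan ℝ K).direction ≠ ⊤ := by
      intro h
      exact hspan ((AffineSubspace.direction_eq_top_iff_of_nonempty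
        (hKne.mono (subset_affineSpan ℝ K))).1 h)
    have horth : ((affineSpan ℝ K).direction)ᗮ ≠ ⊥ := by
      intro h
      exact hdir (Submodule.orthogonal_eq_bot_iff.1 h)
    obtain ⟨n, hn, hn0⟩ := Submodule.exists_mem_ne_zero_of_ne_bot horth
    refine ⟨n, hn0, fun w hw => ?_⟩
    have hmem : w - a ∈ (affineSpan ℝ K).direction := by
      have := AffineSubspace.vsub_mem_direction (subset_affineSpan ℝ K hw)
        (subset_affineSpan ℝ K haK)
      simpa using this
    have : ⟪w - a, n⟫ = 0 := hn _ hmem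
    rw [real_inner_comm] at this
    simp [this]

end InnerLemmas

section NormedLemmas

variable {E : Type*} [NormedAddCommGroup E] [NormedSpace ℝ E]

/-- For an open convex set, the interior of the closure is the set itself. -/
private lemma interior_closure_conv {Ω : Set E} (hΩo : IsOpen Ω) (hΩc : Convex ℝ Ω) :
    interior (closure Ω) = Ω := by
  rcases Ω.eq_empty_or_nonempty with h | ⟨x₁, hx₁⟩
  · simp [h]
  refine Subset.antisymm ?_ ?_
  · intro x hx
    obtain ⟨ε, hε, hball⟩ := Metric.isOpen_iff.1 isOpen_interior x hx
    set ε' : ℝ := ε / (‖x - x₁‖ + 1) with hε'def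
    have hε' : 0 < ε' := by positivity
    have hy : x + ε' • (x - x₁) ∈ closure Ω := by
      refine interior_subset (hball ?_)
      rw [mem_ball, dist_eq_norm]
      have : x + ε' • (x - x₁) - x = ε' • (x - x₁) := by abel
      rw [this, norm_smul, Real.norm_of_nonneg hε'.le, hε'def]
      rw [div_mul_eq_mul_div]
      rw [div_lt_iff₀ (by positivity)]
      nlinarith [norm_nonneg (x - x₁)]
    have hx₁' : x₁ ∈ interior Ω := by rw [hΩo.interior_eq]; exact hx₁
    have hcombo := hΩc.combo_interior_closure_mem_interior hx₁' hy
      (a := ε' / (1 + ε')) (b := 1 / (1 + ε')) (by positivity) (by positivity)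
      (by field_simp; ring)
    have heq : (ε' / (1 + ε')) • x₁ + (1 / (1 + ε')) • (x + ε' • (x - x₁)) = x := by
      have h1 : (1:ℝ) + ε' ≠ 0 := by positivity
      match_scalars <;> (field_simp; try ring)
    rw [heq, hΩo.interior_eq] at hcombo
    exact hcombo
  · nth_rewrite 1 [← hΩo.interior_eq]
    exact interior_mono subset_closure

/-- Concavity-type inequality for the distance to the complement of an open convex set. -/
private lemma infDist_combo {Ω : Set E} (hΩo : IsOpen Ω) (hΩc : Convex ℝ Ω)
    (hc : Ωᶜ.Nonempty) {z x : E} (hz : z ∈ closure Ω) (hx : x ∈ Ω) {t : ℝ}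
    (ht0 : 0 ≤ t) (ht1 : t < 1) :
    t * infDist z Ωᶜ + (1 - t) * infDist x Ωᶜ ≤ infDist (t • z + (1 - t) • x) Ωᶜ := by
  set fz := infDist z Ωᶜ with hfzdef
  set fx := infDist x Ωᶜ with hfxdef
  set m := t • z + (1 - t) • x with hmdef
  set D := t * fz + (1 - t) * fx with hDdef
  by_contra hcon
  push_neg at hcon
  obtain ⟨w, hw, hdw⟩ := (infDist_lt_iff hc).1 hcon
  have hfz0 : 0 ≤ fz := infDist_nonneg
  have hfx0 : 0 < fx := by
    have hxc : x ∉ closure Ωᶜ := by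
      rw [hΩo.isClosed_compl.closure_eq]
      simpa using hx
    rcases eq_or_lt_of_le (infDist_nonneg (x := x) (s := Ωᶜ)) with h0 | h0
    · exact absurd ((mem_closure_iff_infDist_zero hc).2 h0.symm) hxc
    · exact h0
  have hD : 0 < D := by
    have := mul_nonneg ht0 hfz0
    nlinarith
  set e := w - m with hedef
  have he : ‖e‖ < D := by
    rw [hedef, ← dist_eq_norm, dist_comm]
    exact hdw
  set z' := z + (fz / D) • e with hz'def
  set x' := x + (fx / D) • e with hx'def
  have hball : ∀ u : E, ∀ u' : E, u ∈ Ω → dist u' u < infDist u Ωᶜ → u' ∈ Ω := by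
    intro u u' _ hd
    by_contra hu'
    exact absurd (infDist_le_dist_of_mem (Set.mem_compl hu')) (by rw [dist_comm] at hd; linarith)
  have hz' : z' ∈ closure Ω := by
    rcases eq_or_lt_of_le hfz0 with h0 | h0
    · have : z' = z := by rw [hz'def, ← h0]; simp
      rw [this]; exact hz
    · -- fz > 0, so z ∈ Ω and z' ∈ Ω
      have hzΩ : z ∈ Ω := by
        by_contra hzc
        have : fz = 0 := infDist_zero_of_mem (Set.mem_compl hzc)
        linarith
      refine subset_closure (hball z z' hzΩ ?_)
      rw [dist_eq_norm]
      have : z' - z = (fz / D) • e := by rw [hz'def]; abel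
      rw [this, norm_smul, Real.norm_of_nonneg (by positivity)]
      rw [div_mul_eq_mul_div, div_lt_iff₀ hD]
      calc fz * ‖e‖ < fz * D := by exact (mul_lt_mul_iff_right₀ h0).2 he
        _ = fz * D := rfl
  have hx' : x' ∈ Ω := by
    refine hball x x' hx ?_
    rw [dist_eq_norm]
    have : x' - x = (fx / D) • e := by rw [hx'def]; abel
    rw [this, norm_smul, Real.norm_of_nonneg (by positivity)]
    rw [div_mul_eq_mul_div, div_lt_iff₀ hD]
    exact (mul_lt_mul_iff_right₀ hfx0).2 he
  have hcombo : t • z' + (1 - t) • x' = w := by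
    rw [hz'def, hx'def, hedef, hmdef]
    have h1 : t * (fz / D) + (1 - t) * (fx / D) = 1 := by
      field_simp [hDdef]
      linarith [hDdef]
    match_scalars <;> field_simp <;> ring
  have hwΩ : w ∈ Ω := by
    have hx'i : x' ∈ interior Ω := by rw [hΩo.interior_eq]; exact hx'
    have := hΩc.combo_closure_interior_mem_interior (a := t) (b := 1 - t) hz' hx'i ht0
      (by linarith) (by ring)
    rw [hcombo, hΩo.interior_eq] at this
    exact this
  exact hw hwΩ

end NormedLemmas

/-- Monotonicity of the boundary Hausdorff measure for nested convex bodies. -/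
private lemma frontier_hmeas_mono {d : ℕ} {δ : ℝ} (hδ : 0 ≤ δ)
    {A B : Set (EuclideanSpace ℝ (Fin d))}
    (hAne : A.Nonempty) (hAcl : IsClosed A) (hAcv : Convex ℝ A)
    (hBcl : IsClosed B) (hBbd : Bornology.IsBounded B) (hAB : A ⊆ B) :
    μH[δ] (frontier A) ≤ μH[δ] (frontier B) := by
  obtain ⟨P, hPlip, hPmem, hPuniq⟩ := exists_lipschitz_proj hAne hAcl hAcv
  have hsurj : frontier A ⊆ P '' frontier B := by
    intro a ha
    obtain ⟨n, hn0, hsup⟩ := exists_support hAcl hAcv ha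
    have haA : a ∈ A := hAcl.closure_eq ▸ ha.1
    obtain ⟨R, hR⟩ := hBbd.subset_closedBall a
    have hnpos : 0 < ‖n‖ := norm_pos_iff.2 hn0
    set T : Set ℝ := {t | 0 ≤ t ∧ a + t • n ∈ B} with hTdef
    have hT0 : (0:ℝ) ∈ T := ⟨le_refl 0, by simpa using hAB haA⟩
    have hTsub : T ⊆ Set.Icc 0 (R / ‖n‖) := by
      rintro t ⟨ht0, htB⟩
      refine ⟨ht0, ?_⟩
      have h1 := hR htB
      rw [mem_closedBall, dist_eq_norm] at h1
      have h2 : ‖t • n‖ ≤ R := by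
        have : a + t • n - a = t • n := by abel
        rwa [this] at h1
      rw [norm_smul, Real.norm_of_nonneg ht0] at h2
      rw [le_div_iff₀ hnpos]
      exact h2
    have hTcl : IsClosed T := by
      have : T = (Set.Ici (0:ℝ)) ∩ (fun t : ℝ => a + t • n) ⁻¹' B := by
        ext t; simp [hTdef, Set.mem_Ici, and_comm]
      rw [this]
      exact isClosed_Ici.inter (hBcl.preimage (by continuity))
    have hTcp : IsCompact T := isCompact_Icc.of_isClosed_subset hTcl hTsub
    set t0 := sSup T with ht0def
    have ht0T : t0 ∈ T := hTcp.sSup_mem ⟨0, hT0⟩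
    set b := a + t0 • n with hbdef
    have hbB : b ∈ B := ht0T.2
    have hbfr : b ∈ frontier B := by
      rw [hBcl.frontier_eq]
      refine ⟨hbB, fun hbint => ?_⟩
      obtain ⟨ε, hε, hball⟩ := Metric.isOpen_iff.1 isOpen_interior b hbint
      set t1 := t0 + ε / (2 * ‖n‖) with ht1def
      have hc0 : 0 < ε / (2 * ‖n‖) := by positivity
      have ht1T : t1 ∈ T := by
        refine ⟨by rw [ht1def]; have := ht0T.1; linarith, interior_subset (hball ?_)⟩
        rw [mem_ball, dist_eq_norm]
        have heq : a + t1 • n - b = (ε / (2 * ‖n‖)) • n := by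
          rw [hbdef, ht1def, add_smul]; abel
        rw [heq, norm_smul, Real.norm_of_nonneg hc0.le]
        have : ε / (2 * ‖n‖) * ‖n‖ = ε / 2 := by field_simp
        rw [this]; linarith
      have hle := le_csSup hTcp.bddAbove ht1T
      rw [ht1def, ← ht0def] at hle
      linarith
    refine ⟨b, hbfr, ?_⟩
    refine hPuniq b a haA fun w hw => ?_
    have hba : b - a = t0 • n := by rw [hbdef]; abel
    rw [hba, real_inner_smul_left]
    exact mul_nonpos_of_nonneg_of_nonpos ht0T.1 (hsup w hw)
  calc μH[δ] (frontier A) ≤ μH[δ] (P '' frontier B) := measure_mono hsurj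
    _ ≤ ((1:ℝ≥0) : ℝ≥0∞) ^ δ * μH[δ] (frontier B) := hPlip.hausdorffMeasure_image_le hδ _
    _ = μH[δ] (frontier B) := by simp

/-- Lemma `inner parallel perimeter bounds`: for a bounded open convex set `Ω ⊆ ℝ^d` and
`s ∈ (0, r_in(Ω)]`,
`(1 − s/r_in(Ω))^{d−1} H^{d−1}(∂Ω) ≤ H^{d−1}({x ∈ Ω : d_Ω(x) = s}) ≤ H^{d−1}(∂Ω)`. -/
theorem stmt_9 (d : ℕ) (hd : 2 ≤ d) (Ω : Set (EuclideanSpace ℝ (Fin d)))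
    (hne : Ω.Nonempty) (hΩo : IsOpen Ω) (hΩb : Bornology.IsBounded Ω) (hΩc : Convex ℝ Ω)
    (s : ℝ) (hs : s ∈ Set.Ioc (0:ℝ) (inradius Ω)) :
    ENNReal.ofReal ((1 - s / inradius Ω) ^ (d - 1)) * μH[(d:ℝ) - 1] (frontier Ω)
        ≤ μH[(d:ℝ) - 1] {x ∈ Ω | Metric.infDist x Ωᶜ = s} ∧
    μH[(d:ℝ) - 1] {x ∈ Ω | Metric.infDist x Ωᶜ = s} ≤ μH[(d:ℝ) - 1] (frontier Ω) := by
  obtain ⟨hs0, hsr⟩ := hs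
  set f : EuclideanSpace ℝ (Fin d) → ℝ := fun x => infDist x Ωᶜ with hfdef
  have hr : 0 < inradius Ω := lt_of_lt_of_le hs0 hsr
  have hδnn : 0 ≤ (d:ℝ) - 1 := by
    have : (2:ℝ) ≤ (d:ℝ) := by exact_mod_cast hd
    linarith
  -- the complement is nonempty
  have hcne : Ωᶜ.Nonempty := by
    rcases Ωᶜ.eq_empty_or_nonempty with h | h
    · exfalso
      haveI : Nonempty (Fin d) := ⟨⟨0, by omega⟩⟩
      haveI hEnt : Nontrivial (EuclideanSpace ℝ (Fin d)) := inferInstance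
      have hU : Ω = Set.univ := by rwa [compl_empty_iff] at h
      rw [hU] at hΩb
      exact NormedSpace.unbounded_univ ℝ (EuclideanSpace ℝ (Fin d)) hΩb
    · exact h
  have hccl : IsClosed Ωᶜ := hΩo.isClosed_compl
  have hfc : Continuous f := continuous_infDist_pt Ωᶜ
  -- positivity of f on Ω
  have hfpos : ∀ x ∈ Ω, 0 < f x := by
    intro x hx
    rcases eq_or_lt_of_le (infDist_nonneg (x := x) (s := Ωᶜ)) with h0 | h0
    · exfalso
      have := (mem_closure_iff_infDist_zero hcne).2 h0.symm
      rw [hccl.closure_eq] at this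
      exact this hx
    · exact h0
  have hfzero : ∀ x ∉ Ω, f x = 0 := fun x hx => infDist_zero_of_mem (Set.mem_compl hx)
  -- the maximizer of f on the closure
  have hclcp : IsCompact (closure Ω) := hΩb.isCompact_closure
  obtain ⟨x₀, hx₀cl, hx₀max⟩ := hclcp.exists_isMaxOn hne.closure hfc.continuousOn
  have hub : ∀ y ∈ Ω, f y ≤ f x₀ := fun y hy => hx₀max (subset_closure hy)
  have h_r_le : inradius Ω ≤ f x₀ := by
    refine Real.iSup_le (fun x => Real.iSup_le (fun hx => hub x hx) infDist_nonneg) infDist_nonneg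
  have hx₀Ω : x₀ ∈ Ω := by
    obtain ⟨x₁, hx₁⟩ := hne
    have h1 : 0 < f x₀ := lt_of_lt_of_le (hfpos x₁ hx₁) (hub x₁ hx₁)
    by_contra hcon
    rw [hfzero x₀ hcon] at h1
    exact lt_irrefl 0 h1
  have hfx₀ : f x₀ = inradius Ω := by
    refine le_antisymm ?_ h_r_le
    have hinner : f x₀ ≤ ⨆ _ : x₀ ∈ Ω, f x₀ :=
      le_ciSup (⟨f x₀, by rintro y ⟨_, rfl⟩; exact le_refl _⟩ : BddAbove _) hx₀Ω
    have houter : (⨆ _ : x₀ ∈ Ω, f x₀) ≤ ⨆ x, ⨆ _ : x ∈ Ω, f x := by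
      refine le_ciSup (f := fun x => ⨆ _ : x ∈ Ω, f x) (⟨f x₀, ?_⟩ : BddAbove _) x₀
      rintro y ⟨x, rfl⟩
      exact Real.iSup_le (fun hx => hub x hx) infDist_nonneg
    exact hinner.trans houter
  -- the inner parallel body
  set K : Set (EuclideanSpace ℝ (Fin d)) := {x | s ≤ f x} with hKdef
  have hKcl : IsClosed K := isClosed_le continuous_const hfc
  have hKsubΩ : K ⊆ Ω := by
    intro x hx
    by_contra h
    rw [hKdef, mem_setOf_eq, hfzero x h] at hx
    linarith
  have hKne : x₀ ∈ K := by rw [hKdef, mem_setOf_eq, hfx₀]; exact hsr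
  have hKcv : Convex ℝ K := by
    intro u hu v hv a b ha hb hab
    rcases eq_or_lt_of_le hb with hb0 | hb0
    · have ha1 : a = 1 := by linarith
      simp only [← hb0, ha1, one_smul, zero_smul, add_zero]
      exact hu
    · have ha1 : a < 1 := by linarith
      have hcombo := infDist_combo hΩo hΩc hcne (subset_closure (hKsubΩ hu)) (hKsubΩ hv) ha ha1
      have hb' : b = 1 - a := by linarith
      show s ≤ f (a • u + b • v)
      rw [hb']
      refine le_trans ?_ hcombo
      have h1 : a * s ≤ a * f u := mul_le_mul_of_nonneg_left hu ha
      have h2 : (1 - a) * s ≤ (1 - a) * f v := mul_le_mul_of_nonneg_left hv (by linarith)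
      nlinarith
  -- the level set is the frontier of K
  have hL : {x ∈ Ω | f x = s} = frontier K := by
    ext x
    constructor
    · rintro ⟨hxΩ, hfx⟩
      rw [hKcl.frontier_eq]
      refine ⟨le_of_eq hfx.symm, fun hint => ?_⟩
      obtain ⟨ε, hε, hball⟩ := Metric.isOpen_iff.1 isOpen_interior x hint
      obtain ⟨p, hp, hdp⟩ := hccl.exists_infDist_eq_dist hcne x
      have hdps : dist x p = s := by rw [← hdp]; exact hfx
      set τ := min (ε / (2 * s)) (1/2) with hτdef
      have hτ0 : 0 < τ := by
        rw [hτdef]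
        refine lt_min (by positivity) (by norm_num)
      have hτ1 : τ ≤ 1/2 := min_le_right _ _
      set y : EuclideanSpace ℝ (Fin d) := x + τ • (p - x) with hydef
      have hyK : y ∈ K := by
        refine interior_subset (hball ?_)
        rw [mem_ball, dist_eq_norm]
        have : y - x = τ • (p - x) := by rw [hydef]; abel
        rw [this, norm_smul, Real.norm_of_nonneg hτ0.le]
        have hnorm : ‖p - x‖ = s := by rw [← hdps, dist_comm, dist_eq_norm]
        rw [hnorm]
        have : τ ≤ ε / (2 * s) := min_le_left _ _
        have h2 : τ * s ≤ ε / (2 * s) * s := mul_le_mul_of_nonneg_right this hs0.le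
        have h3 : ε / (2 * s) * s = ε / 2 := by field_simp
        rw [h3] at h2
        linarith
      have hfy : f y ≤ (1 - τ) * s := by
        calc f y ≤ dist y p := infDist_le_dist_of_mem hp
          _ = ‖(1 - τ) • (x - p)‖ := by
              rw [dist_eq_norm]; congr 1
              rw [hydef]
              module
          _ = (1 - τ) * s := by
              rw [norm_smul, Real.norm_of_nonneg (by linarith)]
              rw [show ‖x - p‖ = s from by rw [← hdps, dist_eq_norm]]
      have : s ≤ f y := hyK
      nlinarith
    · intro hx
      rw [hKcl.frontier_eq] at hx
      obtain ⟨hxK, hxint⟩ := hx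
      have hxΩ := hKsubΩ hxK
      refine ⟨hxΩ, le_antisymm ?_ hxK⟩
      by_contra h
      push_neg at h
      have hopen : IsOpen {y : EuclideanSpace ℝ (Fin d) | s < f y} :=
        isOpen_lt continuous_const hfc
      have hsubset : {y : EuclideanSpace ℝ (Fin d) | s < f y} ⊆ K := by
        intro y hy
        have hy' : s < f y := hy
        show s ≤ f y
        exact le_of_lt hy'
      exact hxint (interior_maximal hsubset hopen h)
  -- frontier of the closure
  have hfrcl : frontier (closure Ω) = frontier Ω := by
    rw [frontier, closure_closure, interior_closure_conv hΩo hΩc, hΩo.frontier_eq]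
  -- upper bound
  have hupper : μH[(d:ℝ)-1] {x ∈ Ω | f x = s} ≤ μH[(d:ℝ)-1] (frontier Ω) := by
    rw [hL, ← hfrcl]
    exact frontier_hmeas_mono hδnn ⟨x₀, hKne⟩ hKcl hKcv isClosed_closure hΩb.closure
      (hKsubΩ.trans subset_closure)
  refine ⟨?_, hupper⟩
  -- lower bound
  rcases eq_or_lt_of_le hsr with hsr' | hslt
  · have h0 : 1 - s / inradius Ω = 0 := by
      rw [hsr', div_self hr.ne']
      ring
    rw [h0, zero_pow (by omega : d - 1 ≠ 0), ENNReal.ofReal_zero, zero_mul]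
    exact zero_le
  · set t : ℝ := 1 - s / inradius Ω with htdef
    have hts : s / inradius Ω < 1 := (div_lt_one hr).2 hslt
    have ht0 : 0 < t := by rw [htdef]; linarith
    have ht1 : t < 1 := by
      have : 0 < s / inradius Ω := div_pos hs0 hr
      rw [htdef]; linarith
    set A := AffineMap.homothety x₀ t '' (closure Ω) with hAdef
    have hAcv : Convex ℝ A := Convex.affine_image _ hΩc.closure
    have hAcl : IsClosed A := (hclcp.image (AffineMap.homothety_continuous x₀ t)).isClosed
    have hAne : A.Nonempty := ⟨_, mem_image_of_mem _ (subset_closure hx₀Ω)⟩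
    have hh : ∀ z : EuclideanSpace ℝ (Fin d), AffineMap.homothety x₀ t z = t • z + (1 - t) • x₀ := by
      intro z
      rw [AffineMap.homothety_apply]
      simp only [vsub_eq_sub, vadd_eq_add]
      module
    have hAK : A ⊆ K := by
      rintro _ ⟨z, hz, rfl⟩
      show s ≤ f (AffineMap.homothety x₀ t z)
      rw [hh z]
      have hcombo := infDist_combo hΩo hΩc hcne hz hx₀Ω ht0.le ht1
      have h2 : (1 - t) * f x₀ = s := by
        rw [hfx₀, htdef]
        field_simp
        ring
      have h3 : 0 ≤ t * infDist z Ωᶜ := mul_nonneg ht0.le infDist_nonneg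
      show s ≤ infDist (t • z + (1 - t) • x₀) Ωᶜ
      linarith
    -- frontier of A
    have hfrA : frontier A = AffineMap.homothety x₀ t '' (frontier Ω) := by
      set h : EuclideanSpace ℝ (Fin d) ≃ₜ EuclideanSpace ℝ (Fin d) :=
        (Homeomorph.smulOfNeZero t ht0.ne').trans (Homeomorph.addLeft (x₀ - t • x₀)) with hhdef
      have hcoe : ∀ z : EuclideanSpace ℝ (Fin d), h z = AffineMap.homothety x₀ t z := by
        intro z
        rw [hh z]
        show (x₀ - t • x₀) + t • z = t • z + (1 - t) • x₀
        module
      have himg : A = h '' (closure Ω) := by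
        rw [hAdef]
        exact Set.image_congr (fun z _ => (hcoe z).symm)
      rw [himg, ← Homeomorph.image_frontier, hfrcl]
      exact Set.image_congr (fun z _ => hcoe z)
    -- measure of frontier A
    have hmeasA : μH[(d:ℝ)-1] (frontier A)
        = ENNReal.ofReal (t ^ (d - 1)) * μH[(d:ℝ)-1] (frontier Ω) := by
      rw [hfrA, hausdorffMeasure_homothety_image hδnn x₀ ht0.ne']
      rw [ENNReal.smul_def, smul_eq_mul]
      congr 1
      have h1 : ‖t‖₊ = t.toNNReal := (Real.toNNReal_eq_nnnorm_of_nonneg ht0.le).symm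
      have h2 : ((d:ℝ) - 1) = ((d - 1 : ℕ) : ℝ) := by
        rw [Nat.cast_sub (by omega : 1 ≤ d)]
        norm_num
      rw [h1, h2, NNReal.rpow_natCast, ENNReal.ofReal, Real.toNNReal_pow ht0.le]
    calc ENNReal.ofReal (t ^ (d - 1)) * μH[(d:ℝ)-1] (frontier Ω)
        = μH[(d:ℝ)-1] (frontier A) := hmeasA.symm
      _ ≤ μH[(d:ℝ)-1] (frontier K) :=
          frontier_hmeas_mono hδnn hAne hAcl hAcv hKcl (hΩb.subset hKsubΩ) hAK
      _ = μH[(d:ℝ)-1] {x ∈ Ω | f x = s} := by rw [hL]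
end

section
/- Let Ω ⊆ ℝ^d be a nonempty convex set and let a be a point in the closure of Ω. Then the function (0, ∞) → ℝ given by r ↦ |Ω ∩ B_r(a)| / r^d is nonincreasing. -/
open MeasureTheory Metric Set

/-- Bishop–Gromov type monotonicity: for a nonempty convex set `Ω ⊆ ℝ^d` and `a ∈ closure Ω`,
the function `r ↦ |Ω ∩ B_r(a)| / r^d` is nonincreasing on `(0, ∞)`. -/
theorem stmt_11 (d : ℕ) (Ω : Set (EuclideanSpace ℝ (Fin d)))
    (hne : Ω.Nonempty) (hΩc : Convex ℝ Ω)
    (a : EuclideanSpace ℝ (Fin d)) (ha : a ∈ closure Ω) :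
    AntitoneOn (fun r : ℝ => (volume (Ω ∩ Metric.ball a r)).toReal / r ^ d)
      (Set.Ioi 0) := by
  intro r hr s hs hrs
  simp only [Set.mem_Ioi] at hr hs
  set t : ℝ := r / s with ht
  have hs0 : (0:ℝ) < s := hs
  have ht0 : 0 < t := div_pos hr hs0
  have ht1 : t ≤ 1 := (div_le_one hs0).2 hrs
  -- the homothety maps Ω ∩ B_s into closure Ω ∩ B_r
  have hsub : AffineMap.homothety a t '' (Ω ∩ Metric.ball a s) ⊆
      closure Ω ∩ Metric.ball a r := by
    rintro _ ⟨x, ⟨hxΩ, hxb⟩, rfl⟩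
    have hsum : t + (1 - t) = 1 := by ring
    have h1t : (0:ℝ) ≤ 1 - t := by linarith
    constructor
    · have hconv : Convex ℝ (closure Ω) := hΩc.closure
      have hm : t • x + (1 - t) • a ∈ closure Ω :=
        hconv (subset_closure hxΩ) ha ht0.le h1t hsum
      have heq : AffineMap.homothety a t x = t • x + (1 - t) • a := by
        simp only [AffineMap.homothety_apply, vsub_eq_sub, vadd_eq_add]
        module
      rw [heq]; exact hm
    · rw [Metric.mem_ball] at hxb ⊢
      have hd : dist (AffineMap.homothety a t x) a = t * dist x a := by
        have hsb : AffineMap.homothety a t x - a = t • (x - a) := by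
          simp only [AffineMap.homothety_apply, vsub_eq_sub, vadd_eq_add]
          abel
        rw [dist_eq_norm, dist_eq_norm, hsb, norm_smul, Real.norm_eq_abs,
          abs_of_pos ht0]
      rw [hd]
      calc t * dist x a < t * s := mul_lt_mul_of_pos_left hxb ht0
        _ = r := by rw [ht]; field_simp
  -- measure of closure vs measure of Ω
  have hfr : volume (frontier Ω) = 0 := hΩc.addHaar_frontier volume
  have hclos : volume (closure Ω ∩ Metric.ball a r) ≤ volume (Ω ∩ Metric.ball a r) := by
    calc volume (closure Ω ∩ Metric.ball a r)
        ≤ volume ((Ω ∩ Metric.ball a r) ∪ frontier Ω) := by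
          apply measure_mono
          rintro x ⟨hx, hxb⟩
          by_cases hxΩ : x ∈ Ω
          · exact Or.inl ⟨hxΩ, hxb⟩
          · refine Or.inr ⟨hx, fun hint => hxΩ (interior_subset hint)⟩
      _ ≤ volume (Ω ∩ Metric.ball a r) + volume (frontier Ω) := measure_union_le _ _
      _ = volume (Ω ∩ Metric.ball a r) := by rw [hfr, add_zero]
  -- homothety volume
  have himg : volume (AffineMap.homothety a t '' (Ω ∩ Metric.ball a s)) =
      ENNReal.ofReal (t ^ d) * volume (Ω ∩ Metric.ball a s) := by
    rw [MeasureTheory.Measure.addHaar_image_homothety]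
    congr 2
    rw [finrank_euclideanSpace_fin, abs_of_pos (pow_pos ht0 d)]
  have key : ENNReal.ofReal (t ^ d) * volume (Ω ∩ Metric.ball a s) ≤
      volume (Ω ∩ Metric.ball a r) := by
    rw [← himg]
    exact (measure_mono hsub).trans hclos
  -- finiteness
  have hfin_s : volume (Ω ∩ Metric.ball a s) < ⊤ :=
    (measure_mono Set.inter_subset_right).trans_lt measure_ball_lt_top
  have hfin_r : volume (Ω ∩ Metric.ball a r) < ⊤ :=
    (measure_mono Set.inter_subset_right).trans_lt measure_ball_lt_top
  have key' : t ^ d * (volume (Ω ∩ Metric.ball a s)).toReal ≤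
      (volume (Ω ∩ Metric.ball a r)).toReal := by
    have := ENNReal.toReal_mono hfin_r.ne key
    rwa [ENNReal.toReal_mul, ENNReal.toReal_ofReal (pow_pos ht0 d).le] at this
  have hrd : (0:ℝ) < r ^ d := pow_pos hr d
  have hsd : (0:ℝ) < s ^ d := pow_pos hs0 d
  rw [div_le_div_iff₀ hsd hrd]
  have : t ^ d = r ^ d / s ^ d := by rw [ht, div_pow]
  calc (volume (Ω ∩ Metric.ball a s)).toReal * r ^ d
      = (t ^ d * (volume (Ω ∩ Metric.ball a s)).toReal) * s ^ d := by
        rw [this]; field_simp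
    _ ≤ (volume (Ω ∩ Metric.ball a r)).toReal * s ^ d := by
        exact mul_le_mul_of_nonneg_right key' hsd.le
end

section
/- Let d ≥ 2 and let Ω ⊆ ℝ^d be a nonempty open, bounded, convex set. Then for every r > 0 and every Lebesgue-measurable set ω ⊆ Ω one has ∫_ω r^d / V_Ω(x, r) dx ≤ (4^d / |B_1(0)|) · |ω + B_r(0)|. -/
open MeasureTheory Metric Set
open scoped Pointwise ENNReal

/-- First bound of Proposition `bounds integral of local volume`: for a nonempty open bounded
convex set `Ω ⊆ ℝ^d`, `r > 0` and measurable `ω ⊆ Ω`,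
`∫_ω r^d / V_Ω(x,r) dx ≤ (4^d/|B_1|) |ω + B_r|`. -/
theorem stmt_13 (d : ℕ) (hd : 2 ≤ d) (Ω : Set (EuclideanSpace ℝ (Fin d)))
    (hne : Ω.Nonempty) (hΩo : IsOpen Ω) (hΩb : Bornology.IsBounded Ω) (hΩc : Convex ℝ Ω)
    (r : ℝ) (hr : 0 < r) (ω : Set (EuclideanSpace ℝ (Fin d)))
    (hω : MeasurableSet ω) (hωΩ : ω ⊆ Ω) :
    (∫ x in ω, r ^ d / (volume (Ω ∩ Metric.ball x r)).toReal)
      ≤ 4 ^ d / (volume (Metric.ball (0 : EuclideanSpace ℝ (Fin d)) 1)).toReal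
          * (volume (ω + Metric.ball (0 : EuclideanSpace ℝ (Fin d)) r)).toReal := by
  classical
  have _dummy : True := trivial
  set s : ℝ := r / 2 with hs
  have hs0 : 0 < s := by positivity
  set f : EuclideanSpace ℝ (Fin d) → ℝ := fun x => r ^ d / (volume (Ω ∩ Metric.ball x r)).toReal with hf
  have hfnn : ∀ x, 0 ≤ f x := fun x => div_nonneg (by positivity) ENNReal.toReal_nonneg
  have hB1pos : 0 < (volume (Metric.ball (0 : EuclideanSpace ℝ (Fin d)) 1)).toReal :=
    ENNReal.toReal_pos (measure_ball_pos _ _ one_pos).ne' measure_ball_lt_top.ne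
  have hMnn : (0:ℝ) ≤ (volume (ω + Metric.ball (0 : EuclideanSpace ℝ (Fin d)) r)).toReal := ENNReal.toReal_nonneg
  have hRHS0 : (0:ℝ) ≤ 4 ^ d / (volume (Metric.ball (0 : EuclideanSpace ℝ (Fin d)) 1)).toReal
      * (volume (ω + Metric.ball (0 : EuclideanSpace ℝ (Fin d)) r)).toReal :=
    mul_nonneg (div_nonneg (by positivity) hB1pos.le) hMnn
  by_cases hmeas : AEStronglyMeasurable f (volume.restrict ω)
  swap
  · rw [integral_undef (fun h => hmeas h.1)]
    exact hRHS0
  rw [integral_eq_lintegral_of_nonneg_ae (ae_of_all _ hfnn) hmeas]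
  -- notation
  set W : EuclideanSpace ℝ (Fin d) → ℝ≥0∞ := fun y => volume (ω ∩ Metric.ball y s) with hWdef
  set C : EuclideanSpace ℝ (Fin d) → ℝ≥0∞ := fun y => ENNReal.ofReal (r ^ d) / W y with hCdef
  set F : EuclideanSpace ℝ (Fin d) × EuclideanSpace ℝ (Fin d) → ℝ≥0∞ :=
    ({p : EuclideanSpace ℝ (Fin d) × EuclideanSpace ℝ (Fin d) | p.1 ∈ ω ∧ dist p.1 p.2 < s}).indicator (fun p => C p.2) with hFdef
  have hW : Measurable W := by
    have h1 : Measurable fun p : EuclideanSpace ℝ (Fin d) × EuclideanSpace ℝ (Fin d) =>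
        ({q : EuclideanSpace ℝ (Fin d) × EuclideanSpace ℝ (Fin d) | q.2 ∈ ω ∧ dist q.2 q.1 < s}).indicator (fun _ => (1:ℝ≥0∞)) p := by
      refine Measurable.indicator measurable_const ?_
      exact ((hω.preimage measurable_snd).inter
        (measurableSet_lt ((continuous_snd.dist continuous_fst).measurable) measurable_const))
    have : W = fun y : EuclideanSpace ℝ (Fin d) => ∫⁻ x, ({q : EuclideanSpace ℝ (Fin d) × EuclideanSpace ℝ (Fin d) | q.2 ∈ ω ∧ dist q.2 q.1 < s}).indicator
        (fun _ => (1:ℝ≥0∞)) (y, x) := by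
      funext y
      have : (fun x : EuclideanSpace ℝ (Fin d) => ({q : EuclideanSpace ℝ (Fin d) × EuclideanSpace ℝ (Fin d) | q.2 ∈ ω ∧ dist q.2 q.1 < s}).indicator
          (fun _ => (1:ℝ≥0∞)) (y, x)) =
          (ω ∩ Metric.ball y s).indicator (fun _ => (1:ℝ≥0∞)) := by
        funext x
        simp [Set.indicator_apply, Set.mem_setOf_eq, mem_ball, Set.mem_inter_iff]
      rw [this, lintegral_indicator (hω.inter measurableSet_ball)]
      simp [hWdef]
    rw [this]
    exact h1.lintegral_prod_right'
  have hC : Measurable C := measurable_const.div hW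
  have hFmeas : Measurable F := by
    refine Measurable.indicator (hC.comp measurable_snd) ?_
    exact ((hω.preimage measurable_fst).inter
      (measurableSet_lt ((continuous_fst.dist continuous_snd).measurable) measurable_const))
  set c : ℝ≥0∞ := volume (Metric.ball (0 : EuclideanSpace ℝ (Fin d)) s) with hcdef
  have hc0 : c ≠ 0 := (measure_ball_pos _ _ hs0).ne'
  have hcT : c ≠ ∞ := measure_ball_lt_top.ne
  have hWtop : ∀ y, W y ≠ ∞ := fun y =>
    ((measure_mono inter_subset_right).trans_lt measure_ball_lt_top).ne
  -- Step 1: pointwise bound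
  have step1 : ∀ x, ω.indicator (fun x => ENNReal.ofReal (f x)) x
      ≤ c⁻¹ * ∫⁻ y, F (x, y) := by
    intro x
    by_cases hx : x ∈ ω
    · rw [Set.indicator_of_mem hx]
      have key : ENNReal.ofReal (f x) * c ≤ ∫⁻ y, F (x, y) := by
        have hpt : ∀ y, (Metric.ball x s).indicator (fun _ => ENNReal.ofReal (f x)) y
            ≤ F (x, y) := by
          intro y
          by_cases hy : y ∈ Metric.ball x s
          · rw [Set.indicator_of_mem hy]
            have hxy : dist x y < s := by rwa [dist_comm, ← mem_ball]
            have hFxy : F (x, y) = C y := by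
              rw [hFdef]
              exact Set.indicator_of_mem (show (x,y) ∈ {p : EuclideanSpace ℝ (Fin d) × EuclideanSpace ℝ (Fin d) | p.1 ∈ ω ∧ dist p.1 p.2 < s} from ⟨hx, hxy⟩) _
            rw [hFxy]
            -- show ofReal (f x) ≤ C y
            have hsub : ω ∩ Metric.ball y s ⊆ Ω ∩ Metric.ball x r := by
              rintro z ⟨hz1, hz2⟩
              refine ⟨hωΩ hz1, ?_⟩
              rw [mem_ball] at hz2 ⊢
              calc dist z x ≤ dist z y + dist y x := dist_triangle _ _ _
                _ < s + s := by
                    have : dist y x < s := by rwa [dist_comm] at hxy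
                    linarith
                _ = r := by rw [hs]; ring
            have hWV : W y ≤ volume (Ω ∩ Metric.ball x r) := measure_mono hsub
            set V : ℝ≥0∞ := volume (Ω ∩ Metric.ball x r) with hVdef
            have hVtop : V ≠ ∞ :=
              ((measure_mono inter_subset_right).trans_lt measure_ball_lt_top).ne
            by_cases hV0 : V = 0
            · have : f x = 0 := by
                simp [hf, ← hVdef, hV0]
              rw [this]
              simp
            · have hVpos : 0 < V.toReal := ENNReal.toReal_pos hV0 hVtop
              have : ENNReal.ofReal (f x) = ENNReal.ofReal (r ^ d) / V := by
                rw [hf]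
                simp only
                rw [← hVdef, ENNReal.ofReal_div_of_pos hVpos, ENNReal.ofReal_toReal hVtop]
              rw [this, hCdef]
              exact ENNReal.div_le_div le_rfl hWV
          · rw [Set.indicator_of_notMem hy]
            exact zero_le
        calc ENNReal.ofReal (f x) * c
            = ENNReal.ofReal (f x) * volume (Metric.ball x s) := by
              rw [hcdef, Measure.addHaar_ball_center volume x]
          _ = ∫⁻ y, (Metric.ball x s).indicator (fun _ => ENNReal.ofReal (f x)) y := by
              rw [lintegral_indicator measurableSet_ball, setLIntegral_const]
          _ ≤ ∫⁻ y, F (x, y) := lintegral_mono hpt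
      calc ENNReal.ofReal (f x) = c⁻¹ * (ENNReal.ofReal (f x) * c) := by
            rw [← mul_assoc, mul_comm c⁻¹, mul_assoc, ENNReal.inv_mul_cancel hc0 hcT, mul_one]
        _ ≤ c⁻¹ * ∫⁻ y, F (x, y) := mul_le_mul_right key _
    · rw [Set.indicator_of_notMem hx]
      exact zero_le
  -- inner integral in x for fixed y
  have inner_eq : ∀ y, (∫⁻ x, F (x, y)) = C y * W y := by
    intro y
    have : (fun x => F (x, y)) = (ω ∩ Metric.ball y s).indicator (fun _ => C y) := by
      funext x
      rw [hFdef]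
      simp [Set.indicator_apply, Set.mem_setOf_eq, mem_ball, Set.mem_inter_iff]
    rw [this, lintegral_indicator (hω.inter measurableSet_ball), setLIntegral_const]
  -- step 4: bound C y * W y
  have step4 : ∀ y, C y * W y ≤
      ENNReal.ofReal (r ^ d) * (ω + Metric.ball (0 : EuclideanSpace ℝ (Fin d)) s).indicator (fun _ => (1:ℝ≥0∞)) y := by
    intro y
    by_cases hW0 : W y = 0
    · rw [hW0, mul_zero]
      exact zero_le
    · have hmem : y ∈ ω + Metric.ball (0 : EuclideanSpace ℝ (Fin d)) s := by
        obtain ⟨z, hz⟩ := nonempty_of_measure_ne_zero hW0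
        refine Set.mem_add.2 ⟨z, hz.1, y - z, ?_, by abel⟩
        rw [mem_ball_zero_iff, ← dist_eq_norm', ← mem_ball]
        exact hz.2
      rw [Set.indicator_of_mem hmem, mul_one, hCdef]
      rw [ENNReal.div_mul_cancel hW0 (hWtop y)]
  have hopen : IsOpen (ω + Metric.ball (0 : EuclideanSpace ℝ (Fin d)) s) := isOpen_ball.add_left
  -- assemble
  have key : (∫⁻ x in ω, ENNReal.ofReal (f x))
      ≤ c⁻¹ * (ENNReal.ofReal (r ^ d) * volume (ω + Metric.ball (0 : EuclideanSpace ℝ (Fin d)) r)) := by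
    calc (∫⁻ x in ω, ENNReal.ofReal (f x))
        = ∫⁻ x, ω.indicator (fun x => ENNReal.ofReal (f x)) x := (lintegral_indicator hω _).symm
      _ ≤ ∫⁻ x, c⁻¹ * ∫⁻ y, F (x, y) := lintegral_mono step1
      _ = c⁻¹ * ∫⁻ x, ∫⁻ y, F (x, y) :=
          lintegral_const_mul' _ _ (ENNReal.inv_ne_top.2 hc0)
      _ = c⁻¹ * ∫⁻ y, ∫⁻ x, F (x, y) := by
          exact congrArg _ (lintegral_lintegral_swap hFmeas.aemeasurable)
      _ = c⁻¹ * ∫⁻ y, C y * W y := by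
          simp_rw [inner_eq]
      _ ≤ c⁻¹ * ∫⁻ y, ENNReal.ofReal (r ^ d)
            * (ω + Metric.ball (0 : EuclideanSpace ℝ (Fin d)) s).indicator (fun _ => (1:ℝ≥0∞)) y :=
          mul_le_mul_right (lintegral_mono step4) _
      _ = c⁻¹ * (ENNReal.ofReal (r ^ d) * volume (ω + Metric.ball (0 : EuclideanSpace ℝ (Fin d)) s)) := by
          rw [lintegral_const_mul' _ _ ENNReal.ofReal_ne_top,
            lintegral_indicator hopen.measurableSet, setLIntegral_const, one_mul]
      _ ≤ c⁻¹ * (ENNReal.ofReal (r ^ d) * volume (ω + Metric.ball (0 : EuclideanSpace ℝ (Fin d)) r)) := by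
          refine mul_le_mul_right (mul_le_mul_right (measure_mono ?_) _) _
          exact add_subset_add_left (ball_subset_ball (by rw [hs]; linarith))
  -- finiteness and toReal computations
  have hMb : volume (ω + Metric.ball (0 : EuclideanSpace ℝ (Fin d)) r) ≠ ∞ := by
    have : Bornology.IsBounded (ω + Metric.ball (0 : EuclideanSpace ℝ (Fin d)) r) :=
      ((hΩb.subset hωΩ).add isBounded_ball)
    exact this.measure_lt_top.ne
  have hfin : c⁻¹ * (ENNReal.ofReal (r ^ d) * volume (ω + Metric.ball (0 : EuclideanSpace ℝ (Fin d)) r)) ≠ ∞ :=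
    ENNReal.mul_ne_top (ENNReal.inv_ne_top.2 hc0)
      (ENNReal.mul_ne_top ENNReal.ofReal_ne_top hMb)
  have := ENNReal.toReal_mono hfin key
  refine this.trans ?_
  rw [ENNReal.toReal_mul, ENNReal.toReal_mul, ENNReal.toReal_inv,
    ENNReal.toReal_ofReal (by positivity)]
  haveI : Nontrivial (EuclideanSpace ℝ (Fin d)) :=
    Module.nontrivial_of_finrank_pos (R := ℝ) (by rw [finrank_euclideanSpace_fin]; omega)
  have hcval : c.toReal = s ^ d * (volume (Metric.ball (0 : EuclideanSpace ℝ (Fin d)) 1)).toReal := by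
    rw [hcdef, Measure.addHaar_ball _ _ hs0.le, finrank_euclideanSpace_fin, ENNReal.toReal_mul,
      ENNReal.toReal_ofReal (by positivity)]
  rw [hcval]
  set B : ℝ := (volume (Metric.ball (0 : EuclideanSpace ℝ (Fin d)) 1)).toReal with hBdef
  set M : ℝ := (volume (ω + Metric.ball (0 : EuclideanSpace ℝ (Fin d)) r)).toReal with hMdef
  have h1 : (s ^ d * B)⁻¹ * (r ^ d * M) = 2 ^ d / B * M := by
    rw [hs, div_pow]
    field_simp
  rw [h1]
  have h2 : (2:ℝ) ^ d / B ≤ 4 ^ d / B := by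
    have h3 : (2:ℝ) ^ d ≤ 4 ^ d := pow_le_pow_left₀ (by norm_num) (by norm_num) d
    exact div_le_div_of_nonneg_right h3 hB1pos.le
  exact mul_le_mul_of_nonneg_right h2 hMnn
end

section
/- There is an absolute constant C with the following property. Let d ≥ 1 and let Ω ⊆ ℝ^d be an open bounded set with 0 < H^{d−1}(∂Ω) < ∞. Then for all t > 0 and r > 0: | ∫_{{x ∈ Ω : d_Ω(x) < r}} e^{−d_Ω(x)²/t} dx − (√(πt)/2) · H^{d−1}(∂Ω) | ≤ C · √t · H^{d−1}(∂Ω) · [ ∫₀^{r/√t} s² e^{−s²} |ϑ_Ω(s√t)| ds + (1 + |ϑ_Ω(r)|) · e^{−r²/(2t)} ]. -/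
open MeasureTheory Metric Set
open scoped ENNReal

/-- The relative deficit `ϑ_Ω(s) := |{x ∈ Ω : d_Ω(x) < s}| / (s H^{d−1}(∂Ω)) − 1`. -/
noncomputable def vartheta {d : ℕ} (Ω : Set (EuclideanSpace ℝ (Fin d))) (s : ℝ) : ℝ :=
  (volume {x ∈ Ω | Metric.infDist x Ωᶜ < s}).toReal
    / (s * (μH[(d:ℝ) - 1] (frontier Ω)).toReal) - 1

lemma myderiv1 (t u : ℝ) :
    HasDerivAt (fun s : ℝ => -Real.exp (-s^2/t)) (2*u/t * Real.exp (-u^2/t)) u := by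
  have h1 : HasDerivAt (fun s : ℝ => -s^2/t) (-(2*u)/t) u := by
    simpa using (((hasDerivAt_pow 2 u).neg).div_const t)
  have h2 := (h1.exp).neg
  exact h2.congr_deriv (by ring)

lemma myderiv2 (t u : ℝ) :
    HasDerivAt (fun s : ℝ => s * Real.exp (-s^2/t))
      (Real.exp (-u^2/t) - 2*u^2/t * Real.exp (-u^2/t)) u := by
  have h1 : HasDerivAt (fun s : ℝ => -s^2/t) (-(2*u)/t) u := by
    simpa using (((hasDerivAt_pow 2 u).neg).div_const t)
  have h2 := (hasDerivAt_id u).mul h1.exp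
  exact h2.congr_deriv (by simp only [id]; ring)

lemma myftc1 (t c r : ℝ) (h : c ≤ r) :
    ∫ s in c..r, 2*s/t * Real.exp (-s^2/t)
      = Real.exp (-c^2/t) - Real.exp (-r^2/t) := by
  have := intervalIntegral.integral_eq_sub_of_hasDerivAt
    (f := fun s : ℝ => -Real.exp (-s^2/t))
    (f' := fun s : ℝ => 2*s/t * Real.exp (-s^2/t))
    (fun u _ => myderiv1 t u)
    (Continuous.intervalIntegrable (by continuity) c r)
  rw [this]; ring

lemma myftc2 (t r : ℝ) :
    ∫ s in (0:ℝ)..r, (Real.exp (-s^2/t) - 2*s^2/t * Real.exp (-s^2/t))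
      = r * Real.exp (-r^2/t) := by
  have := intervalIntegral.integral_eq_sub_of_hasDerivAt
    (f := fun s : ℝ => s * Real.exp (-s^2/t))
    (f' := fun s : ℝ => Real.exp (-s^2/t) - 2*s^2/t * Real.exp (-s^2/t))
    (fun u _ => myderiv2 t u)
    (Continuous.intervalIntegrable (by continuity) 0 r)
  rw [this]; ring_nf


lemma mygauss (t : ℝ) (ht : 0 < t) :
    ∫ s in Ioi (0:ℝ), Real.exp (-s^2/t) = Real.sqrt (Real.pi * t) / 2 := by
  have h := integral_gaussian_Ioi (1/t)
  have he : (fun s : ℝ => Real.exp (-(1/t) * s^2)) = fun s : ℝ => Real.exp (-s^2/t) := by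
    funext s; ring_nf
  rw [he] at h
  rw [h]
  congr 2
  field_simp

lemma myexp_integrable (t : ℝ) (ht : 0 < t) :
    Integrable (fun s : ℝ => Real.exp (-s^2/t)) := by
  have h := integrable_exp_neg_mul_sq (b := 1/t) (by positivity)
  have he : (fun s : ℝ => Real.exp (-(1/t) * s^2)) = fun s : ℝ => Real.exp (-s^2/t) := by
    funext s; ring_nf
  rwa [he] at h

lemma mykey (t r : ℝ) (ht : 0 < t) (hr : 0 ≤ r) :
    r * Real.exp (-r^2/(2*t)) ≤ Real.sqrt t := by
  have hst : 0 < Real.sqrt t := Real.sqrt_pos.2 ht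
  have hst2 : Real.sqrt t ^ 2 = t := Real.sq_sqrt ht.le
  have h1 : r ≤ Real.sqrt t * (1 + r^2/(2*t)) := by
    have key : r ≤ (2*t + r^2)/(2*Real.sqrt t) := by
      rw [le_div_iff₀ (by positivity)]
      nlinarith [sq_nonneg (r - Real.sqrt t)]
    have heq : (2*t + r^2)/(2*Real.sqrt t) = Real.sqrt t * (1 + r^2/(2*t)) := by
      field_simp
      linear_combination -hst2
    linarith [heq ▸ key]
  have h2 : 1 + r^2/(2*t) ≤ Real.exp (r^2/(2*t)) := by
    have := Real.add_one_le_exp (r^2/(2*t)); linarith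
  have h3 : r ≤ Real.sqrt t * Real.exp (r^2/(2*t)) := by
    calc r ≤ Real.sqrt t * (1 + r^2/(2*t)) := h1
    _ ≤ _ := by nlinarith
  have he : 0 < Real.exp (-r^2/(2*t)) := Real.exp_pos _
  have : Real.exp (r^2/(2*t)) * Real.exp (-r^2/(2*t)) = 1 := by
    rw [← Real.exp_add]; ring_nf; exact Real.exp_zero
  nlinarith



lemma mytail (t r : ℝ) (ht : 0 < t) (hr : 0 < r) :
    ∫ s in Ioi r, Real.exp (-s^2/t) ≤ 2 * Real.sqrt t * Real.exp (-r^2/(2*t)) := by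
  have h2t : (0:ℝ) < 2*t := by linarith
  have hint2 : Integrable (fun s : ℝ => Real.exp (-s^2/(2*t))) := myexp_integrable _ h2t
  have step2 : ∫ s in Ioi r, Real.exp (-s^2/t)
      ≤ ∫ s in Ioi r, Real.exp (-r^2/(2*t)) * Real.exp (-s^2/(2*t)) := by
    apply setIntegral_mono_on ((myexp_integrable t ht).integrableOn)
      ((hint2.const_mul _).integrableOn) measurableSet_Ioi
    intro s hs
    rw [← Real.exp_add]
    apply Real.exp_le_exp.2
    have hs' : r < s := mem_Ioi.1 hs
    have hsq : r^2 ≤ s^2 := by nlinarith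
    have heq : -s^2/t = -s^2/(2*t) + -s^2/(2*t) := by field_simp; ring
    have hle : -s^2/(2*t) ≤ -r^2/(2*t) := by
      apply div_le_div_of_nonneg_right (by linarith) h2t.le
    linarith
  have step3 : ∫ s in Ioi r, Real.exp (-r^2/(2*t)) * Real.exp (-s^2/(2*t))
      = Real.exp (-r^2/(2*t)) * ∫ s in Ioi r, Real.exp (-s^2/(2*t)) :=
    integral_const_mul _ _
  have step4 : ∫ s in Ioi r, Real.exp (-s^2/(2*t)) ≤ ∫ s in Ioi (0:ℝ), Real.exp (-s^2/(2*t)) := by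
    apply setIntegral_mono_set hint2.integrableOn
    · filter_upwards with s using Real.exp_nonneg _
    · exact (Ioi_subset_Ioi hr.le).eventuallyLE
  have step5 := mygauss (2*t) h2t
  have hsq16 : Real.sqrt (Real.pi * (2*t)) ≤ 4 * Real.sqrt t := by
    rw [show Real.pi * (2*t) = (2*Real.pi) * t by ring, Real.sqrt_mul (by positivity)]
    have h16 : (2*Real.pi) ≤ 16 := by nlinarith [Real.pi_le_four]
    have : Real.sqrt (2*Real.pi) ≤ 4 := by
      calc Real.sqrt (2*Real.pi) ≤ Real.sqrt 16 := Real.sqrt_le_sqrt h16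
        _ = 4 := by rw [show (16:ℝ) = 4^2 by norm_num, Real.sqrt_sq (by norm_num)]
    nlinarith [Real.sqrt_nonneg t]
  have hexp : 0 < Real.exp (-r^2/(2*t)) := Real.exp_pos _
  calc ∫ s in Ioi r, Real.exp (-s^2/t)
      ≤ Real.exp (-r^2/(2*t)) * ∫ s in Ioi r, Real.exp (-s^2/(2*t)) := by rw [← step3]; exact step2
    _ ≤ Real.exp (-r^2/(2*t)) * (Real.sqrt (Real.pi * (2*t)) / 2) := by
        rw [← step5]; exact mul_le_mul_of_nonneg_left step4 hexp.le
    _ ≤ 2 * Real.sqrt t * Real.exp (-r^2/(2*t)) := by nlinarith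

set_option maxHeartbeats 1600000 in
/-- Estimate `(2.x)` of the paper (Step 2 of the semi-abstract trace result): for an open
bounded set `Ω ⊆ ℝ^d` with `0 < H^{d−1}(∂Ω) < ∞`, and all `t, r > 0`, the Gaussian boundary
integral differs from `(√(πt)/2) H^{d−1}(∂Ω)` by at most an absolute constant times
`√t H^{d−1}(∂Ω) [∫₀^{r/√t} s² e^{−s²} |ϑ_Ω(s√t)| ds + (1 + |ϑ_Ω(r)|) e^{−r²/(2t)}]`. -/
theorem stmt_15 :
    ∃ C : ℝ, 0 < C ∧
      ∀ (d : ℕ), 1 ≤ d →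
      ∀ (Ω : Set (EuclideanSpace ℝ (Fin d))), IsOpen Ω → Bornology.IsBounded Ω →
      0 < μH[(d:ℝ) - 1] (frontier Ω) → μH[(d:ℝ) - 1] (frontier Ω) < ⊤ →
      ∀ t r : ℝ, 0 < t → 0 < r →
      |(∫ x in {x ∈ Ω | Metric.infDist x Ωᶜ < r},
            Real.exp (-(Metric.infDist x Ωᶜ) ^ 2 / t))
          - Real.sqrt (Real.pi * t) / 2 * (μH[(d:ℝ) - 1] (frontier Ω)).toReal|
        ≤ C * Real.sqrt t * (μH[(d:ℝ) - 1] (frontier Ω)).toReal *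
            ((∫ s in Set.Ioc (0:ℝ) (r / Real.sqrt t),
                s ^ 2 * Real.exp (-s ^ 2) * |vartheta Ω (s * Real.sqrt t)|)
              + (1 + |vartheta Ω r|) * Real.exp (-r ^ 2 / (2 * t))) := by
  refine ⟨4, by norm_num, ?_⟩
  intro d hd Ω hΩo hΩb hμ0 hμtop t r ht hr
  classical
  -- abbreviations
  set P : ℝ := (μH[(d:ℝ) - 1] (frontier Ω)).toReal with hPdef
  have hP : 0 < P := ENNReal.toReal_pos hμ0.ne' hμtop.ne
  have hDcont : Continuous (fun x : EuclideanSpace ℝ (Fin d) => Metric.infDist x Ωᶜ) :=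
    continuous_infDist_pt _
  have hAopen : ∀ s : ℝ, IsOpen {x ∈ Ω | Metric.infDist x Ωᶜ < s} := fun s =>
    hΩo.inter (isOpen_lt hDcont continuous_const)
  have hAm : ∀ s : ℝ, MeasurableSet {x ∈ Ω | Metric.infDist x Ωᶜ < s} := fun s =>
    (hAopen s).measurableSet
  have hΩvol : volume Ω < ⊤ := hΩb.measure_lt_top
  have hAfin : ∀ s : ℝ, volume {x ∈ Ω | Metric.infDist x Ωᶜ < s} < ⊤ := fun s =>
    lt_of_le_of_lt (measure_mono (sep_subset _ _)) hΩvol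
  set V : ℝ → ℝ := fun s => (volume {x ∈ Ω | Metric.infDist x Ωᶜ < s}).toReal with hVdef
  have hVnn : ∀ s, 0 ≤ V s := fun s => ENNReal.toReal_nonneg
  have hVle : ∀ s, V s ≤ (volume Ω).toReal := fun s =>
    ENNReal.toReal_le_toReal (hAfin s).ne hΩvol.ne |>.2 (measure_mono (sep_subset _ _))
  have hVm : Measurable V := by
    have hmono : Monotone (fun s : ℝ => volume {x ∈ Ω | Metric.infDist x Ωᶜ < s}) := by
      intro a b hab
      exact measure_mono (fun x hx => ⟨hx.1, lt_of_lt_of_le hx.2 hab⟩)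
    exact ENNReal.measurable_toReal.comp hmono.measurable
  have hVP : ∀ s : ℝ, 0 < s → V s = s * P * (1 + vartheta Ω s) := by
    intro s hs
    have hv : vartheta Ω s = V s / (s * P) - 1 := by rw [hVdef, hPdef]; rfl
    rw [hv]
    have hsP : s * P ≠ 0 := by positivity
    field_simp
    ring
  -- the function h
  set h : ℝ → ℝ := fun s => 2*s/t * Real.exp (-s^2/t) with hhdef
  have hhcont : Continuous h :=
    ((continuous_const.mul continuous_id).div_const t).mul (((continuous_id.pow 2)).neg.div_const t).rexp
  have hhnn : ∀ s : ℝ, 0 ≤ s → 0 ≤ h s := by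
    intro s hs; rw [hhdef]; positivity
  -- the Gaussian weight
  set g : EuclideanSpace ℝ (Fin d) → ℝ :=
    fun x => Real.exp (-(Metric.infDist x Ωᶜ) ^ 2 / t) with hgdef
  have hgcont : Continuous g := (((hDcont.pow 2).neg).div_const t).rexp
  haveI hfinr : IsFiniteMeasure (volume.restrict {x ∈ Ω | Metric.infDist x Ωᶜ < r}) :=
    ⟨by rw [Measure.restrict_apply_univ]; exact hAfin r⟩
  have hgint : IntegrableOn g {x ∈ Ω | Metric.infDist x Ωᶜ < r} volume := by
    apply Integrable.mono' (integrable_const 1) hgcont.aestronglyMeasurable.restrict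
    filter_upwards with x
    rw [Real.norm_eq_abs, abs_of_pos (Real.exp_pos _)]
    apply Real.exp_le_one_iff.2
    have h1 : 0 ≤ (Metric.infDist x Ωᶜ) ^ 2 / t := by positivity
    rw [neg_div]; linarith
  -- KEY IDENTITY
  have hec : Continuous (fun s : ℝ => Real.exp (-s^2/t)) :=
    ((continuous_id.pow 2).neg.div_const t).rexp
  have hqc : Continuous (fun s : ℝ => 2*s^2/t * Real.exp (-s^2/t)) :=
    ((continuous_const.mul (continuous_id.pow 2)).div_const t).mul hec
  -- KEY IDENTITY
  have key : ∫ x in {x ∈ Ω | Metric.infDist x Ωᶜ < r}, (g x - Real.exp (-r^2/t))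
      = ∫ s in Set.Ioc (0:ℝ) r, h s * V s := by
    set φ : EuclideanSpace ℝ (Fin d) → ℝ → ℝ≥0∞ :=
      fun x s => if Metric.infDist x Ωᶜ < s then ENNReal.ofReal (h s) else 0 with hφdef
    have hGnn : ∀ x ∈ {x ∈ Ω | Metric.infDist x Ωᶜ < r}, 0 ≤ g x - Real.exp (-r^2/t) := by
      intro x hx
      have hD0 : 0 ≤ Metric.infDist x Ωᶜ := infDist_nonneg
      have hxr : Metric.infDist x Ωᶜ < r := hx.2
      have hle : Real.exp (-r^2/t) ≤ g x := by
        simp only [hgdef]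
        apply Real.exp_le_exp.2
        exact div_le_div_of_nonneg_right (by nlinarith) ht.le
      linarith
    have e1 : ∫ x in {x ∈ Ω | Metric.infDist x Ωᶜ < r}, (g x - Real.exp (-r^2/t))
        = (∫⁻ x in {x ∈ Ω | Metric.infDist x Ωᶜ < r},
            ENNReal.ofReal (g x - Real.exp (-r^2/t))).toReal := by
      rw [integral_eq_lintegral_of_nonneg_ae ((ae_restrict_iff' (hAm r)).2 (ae_of_all _ hGnn))
        ((hgcont.sub continuous_const).aestronglyMeasurable.restrict)]
    have e2 : ∀ x ∈ {x ∈ Ω | Metric.infDist x Ωᶜ < r},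
        ENNReal.ofReal (g x - Real.exp (-r^2/t)) = ∫⁻ s in Set.Ioc (0:ℝ) r, φ x s := by
      intro x hx
      have hD0 : 0 ≤ Metric.infDist x Ωᶜ := infDist_nonneg
      have hxr : Metric.infDist x Ωᶜ < r := hx.2
      have hind : ∀ s : ℝ, φ x s = (Set.Ioi (Metric.infDist x Ωᶜ)).indicator
          (fun s => ENNReal.ofReal (h s)) s := by
        intro s; simp only [hφdef]; simp [Set.indicator_apply, Set.mem_Ioi]
      have hseteq : Set.Ioi (Metric.infDist x Ωᶜ) ∩ Set.Ioc (0:ℝ) r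
          = Set.Ioc (Metric.infDist x Ωᶜ) r := by
        ext s
        simp only [Set.mem_inter_iff, Set.mem_Ioi, Set.mem_Ioc]
        constructor
        · rintro ⟨h1, _, h3⟩; exact ⟨h1, h3⟩
        · rintro ⟨h1, h2⟩; exact ⟨h1, lt_of_le_of_lt hD0 h1, h2⟩
      calc ENNReal.ofReal (g x - Real.exp (-r^2/t))
          = ENNReal.ofReal (∫ s in Set.Ioc (Metric.infDist x Ωᶜ) r, h s) := by
            rw [← intervalIntegral.integral_of_le hxr.le]
            simp only [hhdef]
            rw [myftc1 t _ r hxr.le]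
        _ = ∫⁻ s in Set.Ioc (Metric.infDist x Ωᶜ) r, ENNReal.ofReal (h s) := by
            rw [ofReal_integral_eq_lintegral_ofReal hhcont.integrableOn_Ioc
              ((ae_restrict_iff' measurableSet_Ioc).2
                (ae_of_all _ fun s hs => hhnn s (hD0.trans hs.1.le)))]
        _ = ∫⁻ s in Set.Ioc (0:ℝ) r, φ x s := by
            rw [lintegral_congr hind, lintegral_indicator measurableSet_Ioi,
              Measure.restrict_restrict measurableSet_Ioi, hseteq]
    have e3 : (∫⁻ x in {x ∈ Ω | Metric.infDist x Ωᶜ < r},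
          ENNReal.ofReal (g x - Real.exp (-r^2/t)))
        = ∫⁻ x in {x ∈ Ω | Metric.infDist x Ωᶜ < r}, ∫⁻ s in Set.Ioc (0:ℝ) r, φ x s :=
      setLIntegral_congr_fun (hAm r) e2
    have e4 : ∫⁻ x in {x ∈ Ω | Metric.infDist x Ωᶜ < r}, ∫⁻ s in Set.Ioc (0:ℝ) r, φ x s
        = ∫⁻ s in Set.Ioc (0:ℝ) r, ∫⁻ x in {x ∈ Ω | Metric.infDist x Ωᶜ < r}, φ x s := by
      apply lintegral_lintegral_swap
      apply Measurable.aemeasurable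
      simp only [hφdef, Function.uncurry]
      exact Measurable.ite
        (measurableSet_lt (hDcont.comp continuous_fst).measurable measurable_snd)
        (ENNReal.measurable_ofReal.comp (hhcont.measurable.comp measurable_snd))
        measurable_const
    have e5 : ∀ s ∈ Set.Ioc (0:ℝ) r,
        (∫⁻ x in {x ∈ Ω | Metric.infDist x Ωᶜ < r}, φ x s) = ENNReal.ofReal (h s * V s) := by
      intro s hs
      have hmlt : MeasurableSet {x : EuclideanSpace ℝ (Fin d) | Metric.infDist x Ωᶜ < s} :=
        measurableSet_lt hDcont.measurable measurable_const
      have hind : ∀ x, φ x s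
          = ({x : EuclideanSpace ℝ (Fin d) | Metric.infDist x Ωᶜ < s}).indicator
              (fun _ => ENNReal.ofReal (h s)) x := by
        intro x; simp only [hφdef]; simp [Set.indicator_apply]
      rw [lintegral_congr hind, lintegral_indicator hmlt, Measure.restrict_restrict hmlt,
        lintegral_const, Measure.restrict_apply_univ]
      have hseteq : {x : EuclideanSpace ℝ (Fin d) | Metric.infDist x Ωᶜ < s}
          ∩ {x ∈ Ω | Metric.infDist x Ωᶜ < r} = {x ∈ Ω | Metric.infDist x Ωᶜ < s} := by
        ext x
        simp only [Set.mem_inter_iff, Set.mem_setOf_eq, Set.mem_sep_iff]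
        constructor
        · rintro ⟨h1, h2, _⟩; exact ⟨h2, h1⟩
        · rintro ⟨h1, h2⟩; exact ⟨h2, h1, lt_of_lt_of_le h2 hs.2⟩
      rw [hseteq, ENNReal.ofReal_mul (hhnn s hs.1.le)]
      congr 1
      simp only [hVdef]
      exact (ENNReal.ofReal_toReal (hAfin s).ne).symm
    have e6 : ∫⁻ s in Set.Ioc (0:ℝ) r, ∫⁻ x in {x ∈ Ω | Metric.infDist x Ωᶜ < r}, φ x s
        = ∫⁻ s in Set.Ioc (0:ℝ) r, ENNReal.ofReal (h s * V s) :=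
      setLIntegral_congr_fun measurableSet_Ioc e5
    have e7 : (∫⁻ s in Set.Ioc (0:ℝ) r, ENNReal.ofReal (h s * V s)).toReal
        = ∫ s in Set.Ioc (0:ℝ) r, h s * V s := by
      rw [integral_eq_lintegral_of_nonneg_ae
        ((ae_restrict_iff' measurableSet_Ioc).2
          (ae_of_all _ fun s hs => mul_nonneg (hhnn s hs.1.le) (hVnn s)))
        ((hhcont.measurable.mul hVm).aestronglyMeasurable.restrict)]
    rw [e1, e3, e4, e6]
    exact e7
  -- value of the integral
  have hconst : IntegrableOn (fun _ : EuclideanSpace ℝ (Fin d) => Real.exp (-r^2/t))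
      {x ∈ Ω | Metric.infDist x Ωᶜ < r} volume := integrable_const _
  have hIr : ∫ x in {x ∈ Ω | Metric.infDist x Ωᶜ < r}, g x
      = Real.exp (-r^2/t) * V r + ∫ s in Set.Ioc (0:ℝ) r, h s * V s := by
    have hsub := integral_sub hgint hconst
    rw [key, setIntegral_const, smul_eq_mul] at hsub
    simp only [hVdef]
    rw [measureReal_def] at hsub
    linarith
  -- splitting into main and error part
  have hint1 : IntegrableOn (fun s => h s * (s*P)) (Set.Ioc (0:ℝ) r) volume :=
    (hhcont.mul (continuous_id.mul continuous_const)).integrableOn_Ioc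
  have hint2 : IntegrableOn (fun s => h s * (V s - s*P)) (Set.Ioc (0:ℝ) r) volume := by
    apply Integrable.mono' (integrable_const ((2*r/t) * ((volume Ω).toReal + r*P)))
      ((hhcont.measurable.mul (hVm.sub (measurable_id.mul measurable_const))).aestronglyMeasurable.restrict)
    rw [ae_restrict_iff' measurableSet_Ioc]
    apply ae_of_all
    intro s hs
    show ‖h s * (V s - s*P)‖ ≤ _
    rw [Real.norm_eq_abs, abs_mul, abs_of_nonneg (hhnn s hs.1.le)]
    have hh2 : h s ≤ 2*r/t := by
      simp only [hhdef]
      have hs1 : (0:ℝ) ≤ 2*s/t := div_nonneg (by linarith [hs.1]) ht.le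
      have he1 : Real.exp (-s^2/t) ≤ 1 := by
        apply Real.exp_le_one_iff.2
        rw [neg_div]
        have : 0 ≤ s^2/t := by positivity
        linarith
      calc 2*s/t * Real.exp (-s^2/t) ≤ 2*s/t * 1 := mul_le_mul_of_nonneg_left he1 hs1
        _ ≤ 2*r/t := by
            rw [mul_one]
            exact div_le_div_of_nonneg_right (by linarith [hs.2]) ht.le
    have habs : |V s - s*P| ≤ (volume Ω).toReal + r*P := by
      rw [abs_le]
      have h1 := hVnn s
      have h2 := hVle s
      have h3 : s*P ≤ r*P := mul_le_mul_of_nonneg_right hs.2 hP.le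
      have h4 : 0 ≤ s*P := mul_nonneg hs.1.le hP.le
      have h5 : (0:ℝ) ≤ (volume Ω).toReal := ENNReal.toReal_nonneg
      constructor <;> nlinarith
    exact mul_le_mul hh2 habs (abs_nonneg _)
      (div_nonneg (by linarith) ht.le)
  have hsplit2 : ∫ s in Set.Ioc (0:ℝ) r, h s * V s
      = (∫ s in Set.Ioc (0:ℝ) r, h s * (s*P)) + ∫ s in Set.Ioc (0:ℝ) r, h s * (V s - s*P) := by
    rw [← integral_add hint1 hint2]
    congr 1; funext s; ring
  -- main term
  have hmain : ∫ s in Set.Ioc (0:ℝ) r, h s * (s*P)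
      = P * (Real.sqrt (Real.pi*t)/2 - (∫ s in Set.Ioi r, Real.exp (-s^2/t))
          - r * Real.exp (-r^2/t)) := by
    have h1 : ∫ s in Set.Ioc (0:ℝ) r, h s * (s*P)
        = P * ∫ s in (0:ℝ)..r, 2*s^2/t * Real.exp (-s^2/t) := by
      rw [intervalIntegral.integral_of_le hr.le, ← integral_const_mul]
      congr 1; funext s; simp only [hhdef]; ring
    have h2 : ∫ s in (0:ℝ)..r, 2*s^2/t * Real.exp (-s^2/t)
        = (∫ s in (0:ℝ)..r, Real.exp (-s^2/t)) - r * Real.exp (-r^2/t) := by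
      have hf2 := myftc2 t r
      have hsub := intervalIntegral.integral_sub (μ := volume)
        (f := fun s : ℝ => Real.exp (-s^2/t))
        (g := fun s : ℝ => 2*s^2/t * Real.exp (-s^2/t))
        (hec.intervalIntegrable 0 r) (hqc.intervalIntegrable 0 r)
      linarith
    have h3 : ∫ s in (0:ℝ)..r, Real.exp (-s^2/t)
        = Real.sqrt (Real.pi*t)/2 - ∫ s in Set.Ioi r, Real.exp (-s^2/t) := by
      have hdisj : Disjoint (Set.Ioc (0:ℝ) r) (Set.Ioi r) := by
        rw [Set.disjoint_left]; intro s hs hs'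
        exact absurd hs.2 (not_le.2 hs')
      have hU := setIntegral_union hdisj measurableSet_Ioi
        ((myexp_integrable t ht).integrableOn) ((myexp_integrable t ht).integrableOn)
      rw [Set.Ioc_union_Ioi_eq_Ioi hr.le] at hU
      rw [mygauss t ht] at hU
      rw [intervalIntegral.integral_of_le hr.le]
      linarith
    rw [h1, h2, h3]
  -- error term
  have hstpos : 0 < Real.sqrt t := Real.sqrt_pos.2 ht
  have hst2 : Real.sqrt t ^ 2 = t := Real.sq_sqrt ht.le
  have herr : |∫ s in Set.Ioc (0:ℝ) r, h s * (V s - s*P)|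
      ≤ 2 * P * (Real.sqrt t * ∫ s in Set.Ioc (0:ℝ) (r / Real.sqrt t),
          s ^ 2 * Real.exp (-s ^ 2) * |vartheta Ω (s * Real.sqrt t)|) := by
    have habs : |∫ s in Set.Ioc (0:ℝ) r, h s * (V s - s*P)|
        ≤ ∫ s in Set.Ioc (0:ℝ) r, |h s * (V s - s*P)| := by
      simpa only [Real.norm_eq_abs] using
        norm_integral_le_integral_norm (μ := volume.restrict (Set.Ioc (0:ℝ) r))
          (fun s => h s * (V s - s*P))
    have hcong : ∫ s in Set.Ioc (0:ℝ) r, |h s * (V s - s*P)|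
        = ∫ s in Set.Ioc (0:ℝ) r, (2*P) * ((s/Real.sqrt t) ^ 2
            * Real.exp (-(s/Real.sqrt t) ^ 2) * |vartheta Ω ((s/Real.sqrt t) * Real.sqrt t)|) := by
      apply setIntegral_congr_fun measurableSet_Ioc
      intro s hs
      beta_reduce
      rw [show V s - s*P = s*P*(vartheta Ω s) by rw [hVP s hs.1]; ring]
      rw [div_mul_cancel₀ _ hstpos.ne']
      rw [abs_mul, abs_of_nonneg (hhnn s hs.1.le), abs_mul,
        abs_of_nonneg (mul_nonneg hs.1.le hP.le)]
      simp only [hhdef, div_pow, hst2]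
      rw [neg_div]
      ring
    have hcd := intervalIntegral.integral_comp_div (a := (0:ℝ)) (b := r) (c := Real.sqrt t)
      (f := fun u => u ^ 2 * Real.exp (-u ^ 2) * |vartheta Ω (u * Real.sqrt t)|) hstpos.ne'
    beta_reduce at hcd
    have hsub2 : ∫ s in Set.Ioc (0:ℝ) r, (2*P) * ((s/Real.sqrt t) ^ 2
            * Real.exp (-(s/Real.sqrt t) ^ 2) * |vartheta Ω ((s/Real.sqrt t) * Real.sqrt t)|)
        = 2 * P * (Real.sqrt t * ∫ s in Set.Ioc (0:ℝ) (r / Real.sqrt t),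
            s ^ 2 * Real.exp (-s ^ 2) * |vartheta Ω (s * Real.sqrt t)|) := by
      rw [integral_const_mul]
      congr 1
      rw [← intervalIntegral.integral_of_le hr.le, hcd, zero_div, smul_eq_mul]
      congr 1
      rw [intervalIntegral.integral_of_le (by positivity : (0:ℝ) ≤ r / Real.sqrt t)]
    rw [hcong, hsub2] at habs
    exact habs
  -- nonnegativity facts
  have hβpos : 0 < Real.exp (-r^2/(2*t)) := Real.exp_pos _
  have hInt0 : 0 ≤ ∫ s in Set.Ioc (0:ℝ) (r / Real.sqrt t),
      s ^ 2 * Real.exp (-s ^ 2) * |vartheta Ω (s * Real.sqrt t)| :=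
    setIntegral_nonneg measurableSet_Ioc (fun s _ => by positivity)
  have hT0 : 0 ≤ ∫ s in Set.Ioi r, Real.exp (-s^2/t) :=
    setIntegral_nonneg measurableSet_Ioi (fun s _ => Real.exp_nonneg _)
  have hw0 : 0 ≤ 1 + vartheta Ω r := by
    have h1 := hVP r hr
    have h2 := hVnn r
    nlinarith [mul_pos hr hP]
  have h1w : 1 ≤ 1 + |vartheta Ω r| := by linarith [abs_nonneg (vartheta Ω r)]
  have hwle : 1 + vartheta Ω r ≤ 1 + |vartheta Ω r| := by
    linarith [le_abs_self (vartheta Ω r)]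
  have hexpsplit : Real.exp (-r^2/t) = Real.exp (-r^2/(2*t)) * Real.exp (-r^2/(2*t)) := by
    rw [← Real.exp_add]
    congr 1
    rw [← add_div, show -r^2 + -r^2 = 2 * -r^2 by ring,
      mul_div_mul_left _ _ (two_ne_zero (α := ℝ))]
  have hkey := mykey t r ht hr.le
  have hT := mytail t r ht hr
  -- decomposition
  have hdecomp : (∫ x in {x ∈ Ω | Metric.infDist x Ωᶜ < r}, g x)
        - Real.sqrt (Real.pi * t) / 2 * P
      = Real.exp (-r^2/t) * V r + (∫ s in Set.Ioc (0:ℝ) r, h s * (V s - s*P))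
        - P * (∫ s in Set.Ioi r, Real.exp (-s^2/t)) - P * (r * Real.exp (-r^2/t)) := by
    rw [hIr, hsplit2, hmain]; ring
  -- final bounds
  have b1 : Real.exp (-r^2/t) * V r
      ≤ P * (1 + |vartheta Ω r|) * (Real.sqrt t * Real.exp (-r^2/(2*t))) := by
    rw [hVP r hr, hexpsplit]
    have H1 := mul_le_mul_of_nonneg_right hkey
        (mul_nonneg hβpos.le (mul_nonneg hP.le hw0))
    have H2 := mul_le_mul_of_nonneg_left hwle
        (mul_nonneg (mul_nonneg hstpos.le hβpos.le) hP.le)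
    nlinarith [H1, H2]
  have b3 : P * (r * Real.exp (-r^2/t)) ≤ P * (Real.sqrt t * Real.exp (-r^2/(2*t))) := by
    rw [hexpsplit]
    have hb : 0 ≤ Real.exp (-r^2/(2*t)) := hβpos.le
    nlinarith [mul_le_mul_of_nonneg_right (mul_le_mul_of_nonneg_right hkey hb) hP.le]
  have b2 : P * (∫ s in Set.Ioi r, Real.exp (-s^2/t))
      ≤ P * (2 * Real.sqrt t * Real.exp (-r^2/(2*t))) :=
    mul_le_mul_of_nonneg_left hT hP.le
  have hX1nn : 0 ≤ Real.exp (-r^2/t) * V r := mul_nonneg (Real.exp_nonneg _) (hVnn r)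
  rw [hdecomp]
  have m1 : 0 ≤ Real.sqrt t * P * (∫ s in Set.Ioc (0:ℝ) (r / Real.sqrt t),
      s ^ 2 * Real.exp (-s ^ 2) * |vartheta Ω (s * Real.sqrt t)|) :=
    mul_nonneg (mul_nonneg hstpos.le hP.le) hInt0
  have m2 : 0 ≤ Real.sqrt t * P * Real.exp (-r^2/(2*t)) :=
    mul_nonneg (mul_nonneg hstpos.le hP.le) hβpos.le
  have m3 : 0 ≤ Real.sqrt t * P * Real.exp (-r^2/(2*t)) * |vartheta Ω r| :=
    mul_nonneg m2 (abs_nonneg _)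
  have m4 : 0 ≤ P * (∫ s in Set.Ioi r, Real.exp (-s^2/t)) := mul_nonneg hP.le hT0
  have m5 : 0 ≤ P * (r * Real.exp (-r^2/t)) :=
    mul_nonneg hP.le (mul_nonneg hr.le (Real.exp_nonneg _))
  have hEup := le_abs_self (∫ s in Set.Ioc (0:ℝ) r, h s * (V s - s*P))
  have hElo := neg_abs_le (∫ s in Set.Ioc (0:ℝ) r, h s * (V s - s*P))
  refine abs_le.2 ⟨?_, ?_⟩
  · nlinarith [b1, b2, b3, herr, hEup, hElo, hX1nn, m1, m2, m3, m4, m5]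
  · nlinarith [b1, b2, b3, herr, hEup, hElo, hX1nn, m1, m2, m3, m4, m5]
end
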